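/- For every ξ < ω₁ and every infinite L ⊆ ℕ there exists an infinite M ⊆ L such that, setting x_n := ∑_i S^ξ_{M,n}(i) e^ξ_i, one has ‖∑_n a_n x_n‖_ξ = max_n |a_n| for every finitely supported real sequence (a_n); that is, (x_n) is isometrically equivalent in X_ξ to the canonical basis of c₀. -/

import Mathlib

noncomputable section

open Filter Set

namespace SchreierPaper

/-- `ω₁`, the first uncountable ordinal. -/
def omega1 : Ordinal := (Cardinal.aleph 1).ord

/-- `E < F` for finite sets of naturals: every element of `E` is smaller than
every element of `F` (this agrees with `max E < min F` under the conventions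
`max ∅ = 0`, `min ∅ = ∞`). -/
def BlockLt (E F : Finset ℕ) : Prop := ∀ i ∈ E, ∀ j ∈ F, i < j

/-- A Schreier system: the hierarchy of Schreier families `S ξ` of finite sets of
positive integers, together with the fixed choice `limSeq` of cofinal sequences at
countable limit ordinals used in the recursive definition. -/
structure SchreierSystem where
  S : Ordinal → Set (Finset ℕ)
  limSeq : Ordinal → ℕ → Ordinal
  zero_def : S 0 = {E : Finset ℕ | E = ∅ ∨ ∃ n : ℕ, 0 < n ∧ E = {n}}
  succ_def : ∀ ξ : Ordinal,
    S (ξ + 1) = {E : Finset ℕ | E = ∅ ∨ ∃ (k : ℕ) (Es : Fin k → Finset ℕ), 0 < k ∧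
      (∀ i, (Es i).Nonempty ∧ Es i ∈ S ξ) ∧
      (∀ i j : Fin k, i < j → BlockLt (Es i) (Es j)) ∧
      (∀ m ∈ E, k ≤ m) ∧ E = Finset.univ.biUnion Es}
  limSeq_lt : ∀ ξ : Ordinal, ξ < omega1 → Order.IsSuccLimit ξ → ∀ n : ℕ, limSeq ξ n < ξ
  limSeq_strictMono : ∀ ξ : Ordinal, ξ < omega1 → Order.IsSuccLimit ξ → StrictMono (limSeq ξ)
  limSeq_cofinal : ∀ ξ : Ordinal, ξ < omega1 → Order.IsSuccLimit ξ → ∀ β < ξ, ∃ n : ℕ, β ≤ limSeq ξ n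
  limSeq_nested : ∀ ξ : Ordinal, ξ < omega1 → Order.IsSuccLimit ξ →
    ∀ n : ℕ, S (limSeq ξ n + 1) ⊆ S (limSeq ξ (n + 1))
  lim_def : ∀ ξ : Ordinal, ξ < omega1 → Order.IsSuccLimit ξ →
    S ξ = {E : Finset ℕ | E = ∅ ∨ (E.Nonempty ∧ ∃ n : ℕ, (∀ m ∈ E, n ≤ m) ∧
      E ∈ S (limSeq ξ n + 1))}

/-- The Schreier norm `‖x‖_ξ` of a finitely supported sequence. -/
def schreierNorm (SS : SchreierSystem) (ξ : Ordinal) (x : ℕ →₀ ℝ) : ℝ :=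
  sSup {c : ℝ | ∃ E ∈ SS.S ξ, c = ∑ i ∈ E, |x i|}

/-- The action of a finitely supported functional (coefficients with respect to the
coordinate functionals) on a finitely supported vector. -/
def pairing (g x : ℕ →₀ ℝ) : ℝ := g.sum fun j c => c * x j

/-- The dual norm of `X_ξ^*` on finitely supported functionals. -/
def dualNorm (SS : SchreierSystem) (ξ : Ordinal) (g : ℕ →₀ ℝ) : ℝ :=
  sSup {c : ℝ | ∃ x : ℕ →₀ ℝ, schreierNorm SS ξ x ≤ 1 ∧ c = |pairing g x|}

/-- The canonical unit vector `e_n` (also used for the coordinate functional `f_n`). -/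
def unitVec (n : ℕ) : ℕ →₀ ℝ := Finsupp.single n 1

/-- A block sequence: nonzero, finitely supported, supported on positive integers,
with successive supports. -/
def IsBlockSeq (x : ℕ → ℕ →₀ ℝ) : Prop :=
  (∀ i, x i ≠ 0) ∧ (∀ i, ∀ a ∈ (x i).support, 0 < a) ∧
    ∀ i, BlockLt (x i).support (x (i + 1)).support

/-- A normalized block sequence in the Schreier space `X_ξ`. -/
def IsNormalizedBlockSeq (SS : SchreierSystem) (ξ : Ordinal) (x : ℕ → ℕ →₀ ℝ) : Prop :=
  IsBlockSeq x ∧ ∀ i, schreierNorm SS ξ (x i) = 1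

/-- A normalized block sequence in the dual space `X_ξ^*`. -/
def IsNormalizedDualBlockSeq (SS : SchreierSystem) (ξ : Ordinal) (x : ℕ → ℕ →₀ ℝ) : Prop :=
  IsBlockSeq x ∧ ∀ i, dualNorm SS ξ (x i) = 1

/-- The linear combination `∑ a_i u_i` for finitely supported scalars `a`. -/
def combo (u : ℕ → ℕ →₀ ℝ) (a : ℕ →₀ ℝ) : ℕ →₀ ℝ := a.sum fun i c => c • u i

/-- Equivalence of two sequences with respect to two (norm) functions. -/
def SeqEquiv (N₁ : (ℕ →₀ ℝ) → ℝ) (u : ℕ → ℕ →₀ ℝ)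
    (N₂ : (ℕ →₀ ℝ) → ℝ) (v : ℕ → ℕ →₀ ℝ) : Prop :=
  ∃ C : ℝ, 1 ≤ C ∧ ∀ a : ℕ →₀ ℝ,
    C⁻¹ * N₂ (combo v a) ≤ N₁ (combo u a) ∧ N₁ (combo u a) ≤ C * N₂ (combo v a)

/-- A `ϱ`-Schreier pair `((x_i), (x*_i))` in `X_ξ × X_ξ^*`. -/
def IsSchreierPair (SS : SchreierSystem) (ξ ϱ : Ordinal) (x xs : ℕ → ℕ →₀ ℝ) : Prop :=
  IsNormalizedBlockSeq SS ξ x ∧ IsNormalizedDualBlockSeq SS ξ xs ∧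
  (∀ i j, i ≠ j → pairing (xs i) (x j) = 0) ∧
  (∀ i, pairing (xs i) (x i) = ∑ j ∈ (xs i).support, |xs i j| * |x i j|) ∧
  (∃ δ : ℝ, 0 < δ ∧ ∀ i, δ ≤ pairing (xs i) (x i)) ∧
  (∃ J : ℕ → ℕ, StrictMono J ∧ (∀ i, 0 < J i) ∧
    SeqEquiv (schreierNorm SS ξ) x (schreierNorm SS ϱ) (fun i => unitVec (J i)) ∧
    SeqEquiv (dualNorm SS ξ) xs (dualNorm SS ϱ) (fun i => unitVec (J i))) ∧
  (∃ C : ℝ, ∀ n : ℕ, ∀ y : ℕ →₀ ℝ,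
    schreierNorm SS ξ (∑ i ∈ Finset.range n, pairing (xs i) y • x i) ≤ C * schreierNorm SS ξ y)

/-- `I(ξ)`: the set of partial sums of the Cantor normal form of `ξ`, characterized as
the ordinals `ι ≤ ξ` that are minimal among the ordinals `ι'` with `ι' + (ξ - ι) = ξ`. -/
def IOrd (ξ : Ordinal) : Set Ordinal :=
  {ι | ι ≤ ξ ∧ ∀ ι' : Ordinal, ι' + (ξ - ι) = ξ → ι ≤ ι'}

/-- `R(ξ) = {ξ - ι : ι ≤ ξ}`: the set of ordinals `ϱ` such that `ι + ϱ = ξ` for some `ι`. -/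
def ROrd (ξ : Ordinal) : Set Ordinal := {ϱ | ∃ ι : Ordinal, ι + ϱ = ξ}

/-- The family `A_n[S_γ]` of unions of at most `n` successive members of `S γ`. -/
def AnS (SS : SchreierSystem) (n : ℕ) (γ : Ordinal) : Set (Finset ℕ) :=
  {E : Finset ℕ | E = ∅ ∨ ∃ (k : ℕ) (Es : Fin k → Finset ℕ), 0 < k ∧ k ≤ n ∧
    (∀ i, (Es i).Nonempty ∧ Es i ∈ SS.S γ) ∧
    (∀ i j : Fin k, i < j → BlockLt (Es i) (Es j)) ∧ E = Finset.univ.biUnion Es}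

/-- The `⊆`-maximal members of a family of finite sets. -/
def MAXf (F : Set (Finset ℕ)) : Set (Finset ℕ) := {E | E ∈ F ∧ ∀ G ∈ F, E ⊆ G → E = G}

/-- `T_ε x*`: the part of a functional with coefficients of absolute value `> ε`. -/
def Ttrunc (ε : ℝ) (g : ℕ →₀ ℝ) : ℕ →₀ ℝ :=
  haveI := Classical.decPred fun j : ℕ => ε < |g j|
  g.filter fun j => ε < |g j|

/-- `R_ε x*`: the part of a functional with coefficients of absolute value `≤ ε`. -/
def Rtrunc (ε : ℝ) (g : ℕ →₀ ℝ) : ℕ →₀ ℝ :=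
  haveI := Classical.decPred fun j : ℕ => |g j| ≤ ε
  g.filter fun j => |g j| ≤ ε

/-- A `ξ`-flat block sequence of functionals:
`inf_{ε>0} limsup_i ‖R_ε y*_i‖ > 0`. -/
def XiFlat (SS : SchreierSystem) (ξ : Ordinal) (y : ℕ → ℕ →₀ ℝ) : Prop :=
  ∃ δ : ℝ, 0 < δ ∧ ∀ ε : ℝ, 0 < ε →
    δ ≤ Filter.limsup (fun i => dualNorm SS ξ (Rtrunc ε (y i))) Filter.atTop

/-- An `ι`-approachable block sequence of functionals. -/
def Approachable (SS : SchreierSystem) (ι : Ordinal) (y : ℕ → ℕ →₀ ℝ) : Prop :=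
  ∃ ϑ : ℝ, 0 < ϑ ∧ ∀ β < ι, ∀ n j : ℕ, ∃ i > j,
    (Ttrunc ϑ (y i)).support ∉ (AnS SS n β \ MAXf (AnS SS n β))

/-- Auxiliary recursion: given the "first average" operation `G` on infinite sets,
produce the sequence of successive averages, each taken on the set with all the
previous supports removed. -/
def iterAvg (G : Set ℕ → (ℕ →₀ ℝ)) (M : Set ℕ) : ℕ → (ℕ →₀ ℝ) := fun n =>
  Nat.strongRec (fun n prev =>
    G (M \ ⋃ (i : ℕ) (h : i < n), ((prev i h).support : Set ℕ))) n

/-- The repeated averages hierarchy `𝕊^ξ_{M,n}` (with `n` running from `0`). -/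
def RA (SS : SchreierSystem) (ξ : Ordinal) : Set ℕ → ℕ → (ℕ →₀ ℝ) :=
  Ordinal.limitRecOn (motive := fun _ => Set ℕ → ℕ → (ℕ →₀ ℝ)) ξ
    (fun M n => Finsupp.single (Nat.nth (· ∈ M) n) (1 : ℝ))
    (fun _ ih M => iterAvg
      (fun N => ((sInf N : ℕ) : ℝ)⁻¹ • ∑ j ∈ Finset.range (sInf N), ih N j) M)
    (fun ξ _ ih M => iterAvg
      (fun N => if h : SS.limSeq ξ (sInf N) + 1 < ξ then ih _ h N 0 else 0) M)

/-- The modified Schreier families `S^M_ξ`, defined with the same fixed cofinal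
sequences as the given Schreier system. -/
def SMod (SS : SchreierSystem) (ξ : Ordinal) : Set (Finset ℕ) :=
  Ordinal.limitRecOn (motive := fun _ => Set (Finset ℕ)) ξ
    {E : Finset ℕ | E = ∅ ∨ ∃ n : ℕ, 0 < n ∧ E = {n}}
    (fun _ ih => {E : Finset ℕ | E = ∅ ∨ ∃ (k : ℕ) (Es : Fin k → Finset ℕ), 0 < k ∧
      (∀ i, (Es i).Nonempty ∧ Es i ∈ ih ∧ ∀ m ∈ Es i, k ≤ m) ∧
      (∀ i j : Fin k, i ≠ j → Disjoint (Es i) (Es j)) ∧ E = Finset.univ.biUnion Es})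
    (fun ξ _ ih => {E : Finset ℕ | E = ∅ ∨ (E.Nonempty ∧ ∃ n : ℕ, (∀ m ∈ E, n ≤ m) ∧
      ∃ h : SS.limSeq ξ n + 1 < ξ, E ∈ ih _ h)})

/-- `τ_ξ(A)`: the least number of successive members of `S ξ` whose union is `A`. -/
def tau (SS : SchreierSystem) (ξ : Ordinal) (A : Finset ℕ) : ℕ :=
  sInf {k : ℕ | ∃ Fs : Fin k → Finset ℕ, (∀ i, Fs i ∈ SS.S ξ) ∧
    (∀ i j : Fin k, i < j → BlockLt (Fs i) (Fs j)) ∧ A = Finset.univ.biUnion Fs}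

/-- A map `ψ` defined on an infinite set `L` is `ξ`-injective if
`sup_{F ∈ S ξ} τ_ξ(ψ⁻¹(F)) < ∞` (in particular all these preimages are finite). -/
def XiInjective (SS : SchreierSystem) (ξ : Ordinal) (L : Set ℕ) (ψ : ℕ → ℕ) : Prop :=
  ∃ C : ℕ, ∀ F ∈ SS.S ξ, ∃ A : Finset ℕ, (↑A = {x ∈ L | ψ x ∈ F}) ∧ tau SS ξ A ≤ C

/-- The sum of the indicator functionals of a finite set. -/
def indicatorFs (s : Finset ℕ) : ℕ →₀ ℝ := ∑ j ∈ s, Finsupp.single j 1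

section Operators

variable {X Y : Type*} [NormedAddCommGroup X] [NormedSpace ℝ X]
  [NormedAddCommGroup Y] [NormedSpace ℝ Y]

/-- A strictly singular operator. -/
def StrictlySingular (T : X →L[ℝ] Y) : Prop :=
  ∀ ε : ℝ, 0 < ε → ∀ Z : Submodule ℝ X, ¬ FiniteDimensional ℝ Z →
    ∃ x ∈ Z, ‖x‖ = 1 ∧ ‖T x‖ < ε

/-- A basic sequence in a normed space. -/
def IsBasicSeq (x : ℕ → X) : Prop :=
  (∀ i, x i ≠ 0) ∧ ∃ K : ℝ, ∀ m n : ℕ, m ≤ n → ∀ a : ℕ → ℝ,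
    ‖∑ i ∈ Finset.range m, a i • x i‖ ≤ K * ‖∑ i ∈ Finset.range n, a i • x i‖

/-- An `S_ϱ`-strictly singular operator. -/
def SSsingular (SS : SchreierSystem) (ϱ : Ordinal) (T : X →L[ℝ] Y) : Prop :=
  ∀ ε : ℝ, 0 < ε → ∀ x : ℕ → X, IsBasicSeq x →
    ∃ F ∈ SS.S ϱ, ∃ v ∈ Submodule.span ℝ {w : X | ∃ i ∈ F, w = x i},
      ‖v‖ = 1 ∧ ‖T v‖ < ε

/-- A compact operator: the image of the unit ball is relatively compact. -/
def CompactOp (T : X →L[ℝ] Y) : Prop :=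
  IsCompact (closure (⇑T '' Metric.closedBall 0 1))

/-- A finitely strictly singular operator. -/
def FinitelyStrictlySingular (T : X →L[ℝ] Y) : Prop :=
  ∀ ε : ℝ, 0 < ε → ∃ n : ℕ, ∀ E : Submodule ℝ X, FiniteDimensional ℝ E →
    Module.finrank ℝ E = n → ∃ x ∈ E, ‖x‖ = 1 ∧ ‖T x‖ < ε

/-- A closed operator ideal on a Banach space: a norm-closed linear subspace of the
bounded operators, stable under two-sided composition with bounded operators. -/
def IsClosedOperatorIdeal (I : Set (X →L[ℝ] X)) : Prop :=
  IsClosed I ∧ (0 : X →L[ℝ] X) ∈ I ∧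
  (∀ S T : X →L[ℝ] X, S ∈ I → T ∈ I → S + T ∈ I) ∧
  (∀ (c : ℝ) (T : X →L[ℝ] X), T ∈ I → c • T ∈ I) ∧
  (∀ A B : X →L[ℝ] X, ∀ T ∈ I, A.comp (T.comp B) ∈ I)

end Operators


-- ============ my infra ============

lemma iterAvg_eq (G : Set ℕ → (ℕ →₀ ℝ)) (M : Set ℕ) (n : ℕ) :
    iterAvg G M n = G (M \ ⋃ (i : ℕ) (_ : i < n), ((iterAvg G M i).support : Set ℕ)) := by
  unfold iterAvg
  rw [Nat.strongRecOn'_beta]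

lemma RA_zero (SS : SchreierSystem) :
    RA SS 0 = fun M n => Finsupp.single (Nat.nth (· ∈ M) n) (1 : ℝ) := by
  rw [RA, Ordinal.limitRecOn_zero]

lemma RA_succ (SS : SchreierSystem) (ζ : Ordinal) :
    RA SS (ζ + 1) = fun M => iterAvg
      (fun N => ((sInf N : ℕ) : ℝ)⁻¹ • ∑ j ∈ Finset.range (sInf N), RA SS ζ N j) M := by
  rw [RA, Ordinal.add_one_eq_succ, Ordinal.limitRecOn_succ]
  rfl

lemma RA_limit (SS : SchreierSystem) (ζ : Ordinal) (h : Order.IsSuccLimit ζ) :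
    RA SS ζ = fun M => iterAvg
      (fun N => if h' : SS.limSeq ζ (sInf N) + 1 < ζ then RA SS (SS.limSeq ζ (sInf N) + 1) N 0
        else 0) M := by
  conv_lhs => rw [RA, Ordinal.limitRecOn_limit _ _ _ _ h]
  rfl

/-- leftover set -/
def lov (SS : SchreierSystem) (ζ : Ordinal) (N : Set ℕ) (n : ℕ) : Set ℕ :=
  N \ ⋃ (i : ℕ) (_ : i < n), ((RA SS ζ N i).support : Set ℕ)

def SuperInc (N : Set ℕ) : Prop :=
  (∀ s ∈ N, 2 ≤ s) ∧ ∀ a ∈ N, ∀ b ∈ N, a < b → a ^ (a + 2) ≤ b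

lemma SuperInc.subset {N N' : Set ℕ} (h : SuperInc N) (hsub : N' ⊆ N) : SuperInc N' :=
  ⟨fun s hs => h.1 s (hsub hs), fun a ha b hb => h.2 a (hsub ha) b (hsub hb)⟩

structure Pack0 (SS : SchreierSystem) (ζ : Ordinal) : Prop where
  nonneg : ∀ N : Set ℕ, N.Infinite → (∀ s ∈ N, 0 < s) → ∀ n i, 0 ≤ RA SS ζ N n i
  mass : ∀ N : Set ℕ, N.Infinite → (∀ s ∈ N, 0 < s) → ∀ n,
    ((RA SS ζ N n).sum fun _ c => c) = 1
  supp_ne : ∀ N : Set ℕ, N.Infinite → (∀ s ∈ N, 0 < s) → ∀ n,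
    (RA SS ζ N n).support.Nonempty
  supp_sub : ∀ N : Set ℕ, N.Infinite → (∀ s ∈ N, 0 < s) → ∀ n,
    ↑(RA SS ζ N n).support ⊆ lov SS ζ N n
  initseg : ∀ N : Set ℕ, N.Infinite → (∀ s ∈ N, 0 < s) → ∀ n,
    ∀ s ∈ lov SS ζ N n, ∀ b ∈ (RA SS ζ N n).support, s ≤ b →
      s ∈ (RA SS ζ N n).support
  memS : ∀ N : Set ℕ, N.Infinite → (∀ s ∈ N, 0 < s) → ∀ n,
    (RA SS ζ N n).support ∈ SS.S ζ
  maxS : ∀ N : Set ℕ, N.Infinite → (∀ s ∈ N, 0 < s) → ∀ n,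
    ∀ F ∈ SS.S ζ, (RA SS ζ N n).support ⊆ F → ∀ q ∈ F,
      ∃ b ∈ (RA SS ζ N n).support, q ≤ b
  lb : ∀ N : Set ℕ, N.Infinite → (∀ s ∈ N, 0 < s) → ∀ n,
    ∀ T ∈ (RA SS ζ N n).support, (∀ b ∈ (RA SS ζ N n).support, b ≤ T) →
      ∀ i ∈ (RA SS ζ N n).support,
        1 ≤ (T : ℝ) ^ ((RA SS ζ N n).support.card - 1) * RA SS ζ N n i

structure Pack (SS : SchreierSystem) (ζ : Ordinal) extends Pack0 SS ζ : Prop where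
  est : ∀ N : Set ℕ, N.Infinite → SuperInc N → ∀ E ∈ SS.S ζ, ∀ J : Finset ℕ,
    ∑ n ∈ J, ∑ i ∈ E, RA SS ζ N n i ≤ 1



-- ===== S family basics =====

lemma S_succ_iff (SS : SchreierSystem) (ζ : Ordinal) (E : Finset ℕ) :
    E ∈ SS.S (ζ + 1) ↔ E = ∅ ∨ ∃ (k : ℕ) (Es : Fin k → Finset ℕ), 0 < k ∧
      (∀ i, (Es i).Nonempty ∧ Es i ∈ SS.S ζ) ∧
      (∀ i j : Fin k, i < j → BlockLt (Es i) (Es j)) ∧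
      (∀ m ∈ E, k ≤ m) ∧ E = Finset.univ.biUnion Es := by
  rw [SS.succ_def]; rfl

lemma S_zero_iff (SS : SchreierSystem) (E : Finset ℕ) :
    E ∈ SS.S 0 ↔ E = ∅ ∨ ∃ n : ℕ, 0 < n ∧ E = {n} := by
  rw [SS.zero_def]; rfl

lemma S_lim_iff (SS : SchreierSystem) {ζ : Ordinal} (hζ : ζ < omega1) (hlim : Order.IsSuccLimit ζ)
    (E : Finset ℕ) :
    E ∈ SS.S ζ ↔ E = ∅ ∨ (E.Nonempty ∧ ∃ n : ℕ, (∀ m ∈ E, n ≤ m) ∧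
      E ∈ SS.S (SS.limSeq ζ n + 1)) := by
  rw [SS.lim_def ζ hζ hlim]; rfl

lemma S_pos_succ (SS : SchreierSystem) (ζ : Ordinal) {E : Finset ℕ}
    (hE : E ∈ SS.S (ζ + 1)) : ∀ m ∈ E, 0 < m := by
  rcases (S_succ_iff SS ζ E).1 hE with rfl | ⟨k, Es, hk, _, _, hkm, _⟩
  · simp
  · exact fun m hm => lt_of_lt_of_le hk (hkm m hm)

lemma S_pos (SS : SchreierSystem) {ζ : Ordinal} (hζ : ζ < omega1) {E : Finset ℕ}
    (hE : E ∈ SS.S ζ) : ∀ m ∈ E, 0 < m := by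
  rcases Ordinal.zero_or_succ_or_isSuccLimit ζ with rfl | ⟨ζ', rfl⟩ | hlim
  · rcases (S_zero_iff SS E).1 hE with rfl | ⟨n, hn, rfl⟩
    · simp
    · simpa using hn
  · rw [← Ordinal.add_one_eq_succ] at hE
    exact S_pos_succ SS ζ' hE
  · rcases (S_lim_iff SS hζ hlim E).1 hE with rfl | ⟨_, n, _, hE'⟩
    · simp
    · exact S_pos_succ SS _ hE'

lemma empty_mem_S (SS : SchreierSystem) {ζ : Ordinal} (hζ : ζ < omega1) :
    (∅ : Finset ℕ) ∈ SS.S ζ := by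
  rcases Ordinal.zero_or_succ_or_isSuccLimit ζ with rfl | ⟨ζ', rfl⟩ | hlim
  · exact (S_zero_iff SS _).2 (Or.inl rfl)
  · rw [← Ordinal.add_one_eq_succ]
    exact (S_succ_iff SS ζ' _).2 (Or.inl rfl)
  · exact (S_lim_iff SS hζ hlim _).2 (Or.inl rfl)

lemma S_mono_succ (SS : SchreierSystem) {ζ : Ordinal} (hζ : ζ < omega1) :
    SS.S ζ ⊆ SS.S (ζ + 1) := by
  intro E hE
  rcases E.eq_empty_or_nonempty with rfl | hne
  · exact (S_succ_iff SS ζ _).2 (Or.inl rfl)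
  · refine (S_succ_iff SS ζ _).2 (Or.inr ⟨1, fun _ => E, one_pos, fun _ => ⟨hne, hE⟩, ?_, ?_, ?_⟩)
    · intro i j hij; exact absurd hij (by omega)
    · exact fun m hm => S_pos SS hζ hE m hm
    · simp

lemma S_chain (SS : SchreierSystem) {ζ : Ordinal} (hζ : ζ < omega1) (hlim : Order.IsSuccLimit ζ) :
    ∀ i j : ℕ, i ≤ j → SS.S (SS.limSeq ζ i + 1) ⊆ SS.S (SS.limSeq ζ j + 1) := by
  intro i j hij
  induction j with
  | zero => obtain rfl : i = 0 := Nat.le_zero.1 hij; exact le_refl _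
  | succ j ihj =>
    rcases Nat.lt_or_ge i (j+1) with h | h
    · have h1 : SS.S (SS.limSeq ζ i + 1) ⊆ SS.S (SS.limSeq ζ j + 1) := ihj (by omega)
      have h2 := SS.limSeq_nested ζ hζ hlim j
      have h3 : SS.S (SS.limSeq ζ (j+1)) ⊆ SS.S (SS.limSeq ζ (j+1) + 1) :=
        S_mono_succ SS (lt_trans (SS.limSeq_lt ζ hζ hlim (j+1)) hζ)
      exact fun E hE => h3 (h2 (h1 hE))
    · obtain rfl : i = j + 1 := le_antisymm hij h
      exact le_refl _

lemma S_chain' (SS : SchreierSystem) {ζ : Ordinal} (hζ : ζ < omega1) (hlim : Order.IsSuccLimit ζ)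
    {i j : ℕ} (hij : i < j) : SS.S (SS.limSeq ζ i + 1) ⊆ SS.S (SS.limSeq ζ j) := by
  obtain ⟨j, rfl⟩ : ∃ j', j = j' + 1 := ⟨j - 1, by omega⟩
  exact fun E hE => SS.limSeq_nested ζ hζ hlim j (S_chain SS hζ hlim i j (by omega) hE)

-- ===== finsupp helpers =====

lemma mass_smul (c : ℝ) (x : ℕ →₀ ℝ) :
    ((c • x).sum fun _ v => v) = c * x.sum fun _ v => v := by
  rw [Finsupp.sum_smul_index (fun _ => rfl), Finsupp.mul_sum]

lemma mass_finset_sum {ι : Type*} (s : Finset ι) (f : ι → ℕ →₀ ℝ) :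
    ((∑ i ∈ s, f i).sum fun _ v => v) = ∑ i ∈ s, (f i).sum fun _ v => v :=
  (Finsupp.sum_finset_sum_index (fun _ => rfl) (fun _ _ _ => rfl)).symm

lemma mass_eq_sum_support (x : ℕ →₀ ℝ) : (x.sum fun _ v => v) = ∑ i ∈ x.support, x i := rfl

lemma sum_le_mass {x : ℕ →₀ ℝ} (hx : ∀ i, 0 ≤ x i) (E : Finset ℕ) :
    ∑ i ∈ E, x i ≤ x.sum fun _ v => v := by
  classical
  rw [mass_eq_sum_support]
  have h1 : ∑ i ∈ E, x i = ∑ i ∈ E ∩ x.support, x i := by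
    refine (Finset.sum_subset (Finset.inter_subset_left) ?_).symm
    intro i hi hni
    by_contra hxi
    exact hni (Finset.mem_inter.2 ⟨hi, Finsupp.mem_support_iff.2 hxi⟩)
  rw [h1]
  exact Finset.sum_le_sum_of_subset_of_nonneg Finset.inter_subset_right
    (fun i _ _ => hx i)

lemma sum_le_mass_sub {x : ℕ →₀ ℝ} (hx : ∀ i, 0 ≤ x i) (E : Finset ℕ) {i₀ : ℕ}
    (hi₀ : i₀ ∈ x.support) (hi₀E : i₀ ∉ E) :
    ∑ i ∈ E, x i ≤ (x.sum fun _ v => v) - x i₀ := by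
  classical
  rw [mass_eq_sum_support]
  have h1 : ∑ i ∈ E, x i = ∑ i ∈ E ∩ x.support, x i := by
    refine (Finset.sum_subset (Finset.inter_subset_left) ?_).symm
    intro i hi hni
    by_contra hxi
    exact hni (Finset.mem_inter.2 ⟨hi, Finsupp.mem_support_iff.2 hxi⟩)
  have h2 : ∑ i ∈ x.support, x i = ∑ i ∈ x.support \ {i₀}, x i + x i₀ := by
    rw [Finset.sum_eq_sum_sdiff_singleton_add hi₀]
  rw [h1, h2]
  have h3 : E ∩ x.support ⊆ x.support \ {i₀} := by
    intro i hi
    rcases Finset.mem_inter.1 hi with ⟨hiE, his⟩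
    refine Finset.mem_sdiff.2 ⟨his, ?_⟩
    simp only [Finset.mem_singleton]
    rintro rfl; exact hi₀E hiE
  have := Finset.sum_le_sum_of_subset_of_nonneg h3 (fun i _ _ => hx i)
  linarith

lemma support_finset_sum_nonneg {ι : Type*} [DecidableEq ι] {s : Finset ι} {f : ι → ℕ →₀ ℝ}
    (h : ∀ i ∈ s, ∀ j, 0 ≤ f i j) :
    (∑ i ∈ s, f i).support = s.biUnion fun i => (f i).support := by
  classical
  ext j
  simp only [Finsupp.mem_support_iff, Finset.mem_biUnion, Finsupp.finset_sum_apply]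
  constructor
  · intro hne
    by_contra hc
    push_neg at hc
    exact hne (Finset.sum_eq_zero (fun i hi => hc i hi))
  · rintro ⟨i, hi, hij⟩
    intro h0
    have := (Finset.sum_eq_zero_iff_of_nonneg (fun i hi => h i hi j)).1 h0 i hi
    exact hij this

-- ===== lov lemmas =====

lemma lov_zero (SS : SchreierSystem) (ζ : Ordinal) (N : Set ℕ) : lov SS ζ N 0 = N := by
  simp [lov]

lemma lov_eq_diff (SS : SchreierSystem) (ζ : Ordinal) (N : Set ℕ) (n : ℕ) :
    lov SS ζ N n = N \ ↑((Finset.range n).biUnion fun i => (RA SS ζ N i).support) := by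
  ext s
  simp [lov]

lemma lov_infinite (SS : SchreierSystem) (ζ : Ordinal) {N : Set ℕ} (hN : N.Infinite) (n : ℕ) :
    (lov SS ζ N n).Infinite := by
  rw [lov_eq_diff]
  exact hN.diff (Finset.finite_toSet _)

lemma lov_subset (SS : SchreierSystem) (ζ : Ordinal) (N : Set ℕ) (n : ℕ) :
    lov SS ζ N n ⊆ N := Set.diff_subset

lemma lov_mono (SS : SchreierSystem) (ζ : Ordinal) (N : Set ℕ) {n m : ℕ} (hnm : n ≤ m) :
    lov SS ζ N m ⊆ lov SS ζ N n := by
  intro s hs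
  refine ⟨hs.1, fun hc => hs.2 ?_⟩
  simp only [Set.mem_iUnion] at hc ⊢
  obtain ⟨i, hi, hsi⟩ := hc
  exact ⟨i, lt_of_lt_of_le hi hnm, hsi⟩

lemma lov_pos (SS : SchreierSystem) (ζ : Ordinal) {N : Set ℕ} (hpos : ∀ s ∈ N, 0 < s)
    (n : ℕ) : ∀ s ∈ lov SS ζ N n, 0 < s := fun s hs => hpos s hs.1



-- ===== Pack derived lemmas =====

variable {SS : SchreierSystem} {ζ : Ordinal} {N : Set ℕ}

lemma Pack0.mem_lov_iff (P : Pack0 SS ζ) (hN : N.Infinite) (hpos : ∀ s ∈ N, 0 < s)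
    {n : ℕ} {s : ℕ} :
    s ∈ lov SS ζ N n ↔ s ∈ N ∧ ∀ i < n, ∀ b ∈ (RA SS ζ N i).support, b < s := by
  constructor
  · intro hs
    refine ⟨hs.1, fun i hi b hb => ?_⟩
    by_contra hc
    push_neg at hc
    have hsl : s ∈ lov SS ζ N i := lov_mono SS ζ N (le_of_lt hi) hs
    have hmem := P.initseg N hN hpos i s hsl b hb hc
    exact hs.2 (by simp only [Set.mem_iUnion]; exact ⟨i, hi, hmem⟩)
  · rintro ⟨hsN, h⟩
    refine ⟨hsN, fun hc => ?_⟩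
    simp only [Set.mem_iUnion] at hc
    obtain ⟨i, hi, hsi⟩ := hc
    exact lt_irrefl s (h i hi s hsi)

lemma Pack0.blocks_lt (P : Pack0 SS ζ) (hN : N.Infinite) (hpos : ∀ s ∈ N, 0 < s)
    {i n : ℕ} (hin : i < n) {a b : ℕ} (ha : a ∈ (RA SS ζ N i).support)
    (hb : b ∈ (RA SS ζ N n).support) : a < b := by
  have hbl : (b : ℕ) ∈ lov SS ζ N n := P.supp_sub N hN hpos n hb
  exact ((P.mem_lov_iff hN hpos).1 hbl).2 i hin a ha

lemma Pack0.min_supp (P : Pack0 SS ζ) (hN : N.Infinite) (hpos : ∀ s ∈ N, 0 < s) (n : ℕ) :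
    sInf (lov SS ζ N n) ∈ (RA SS ζ N n).support ∧
      ∀ b ∈ (RA SS ζ N n).support, sInf (lov SS ζ N n) ≤ b := by
  have hinf := lov_infinite SS ζ hN n
  have hmem : sInf (lov SS ζ N n) ∈ lov SS ζ N n := Nat.sInf_mem hinf.nonempty
  have hle : ∀ b ∈ (RA SS ζ N n).support, sInf (lov SS ζ N n) ≤ b := fun b hb =>
    Nat.sInf_le (P.supp_sub N hN hpos n hb)
  obtain ⟨b₀, hb₀⟩ := P.supp_ne N hN hpos n
  exact ⟨P.initseg N hN hpos n _ hmem b₀ hb₀ (hle b₀ hb₀), hle⟩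

lemma Pack0.apply_eq_zero_of_ne (P : Pack0 SS ζ) (hN : N.Infinite) (hpos : ∀ s ∈ N, 0 < s)
    {i n : ℕ} (hin : i ≠ n) {b : ℕ} (hb : b ∈ (RA SS ζ N i).support) :
    RA SS ζ N n b = 0 := by
  by_contra hc
  have hbn : b ∈ (RA SS ζ N n).support := Finsupp.mem_support_iff.2 hc
  rcases lt_or_gt_of_ne hin with h | h
  · exact lt_irrefl b (P.blocks_lt hN hpos h hb hbn)
  · exact lt_irrefl b (P.blocks_lt hN hpos h hbn hb)

-- ===== iterAvg structural machinery =====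

def Gsucc (SS : SchreierSystem) (ζ : Ordinal) : Set ℕ → (ℕ →₀ ℝ) := fun N =>
  ((sInf N : ℕ) : ℝ)⁻¹ • ∑ j ∈ Finset.range (sInf N), RA SS ζ N j

def Glim (SS : SchreierSystem) (ζ : Ordinal) : Set ℕ → (ℕ →₀ ℝ) := fun N =>
  if _ : SS.limSeq ζ (sInf N) + 1 < ζ then RA SS (SS.limSeq ζ (sInf N) + 1) N 0 else 0

lemma RA_succ' (SS : SchreierSystem) (ζ : Ordinal) :
    RA SS (ζ + 1) = fun N => iterAvg (Gsucc SS ζ) N := RA_succ SS ζ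

lemma RA_limit' (SS : SchreierSystem) (ζ : Ordinal) (h : Order.IsSuccLimit ζ) :
    RA SS ζ = fun N => iterAvg (Glim SS ζ) N := RA_limit SS ζ h

lemma RA_eq_G (SS : SchreierSystem) (ζ : Ordinal) (G : Set ℕ → (ℕ →₀ ℝ))
    (hRA : RA SS ζ = fun N => iterAvg G N) (N : Set ℕ) (n : ℕ) :
    RA SS ζ N n = G (lov SS ζ N n) := by
  have h2 : ∀ i, iterAvg G N i = RA SS ζ N i := fun i => by rw [hRA]
  conv_lhs => rw [hRA]
  show iterAvg G N n = _
  rw [iterAvg_eq]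
  simp only [h2, lov]

/-- structural conclusions for a level defined by `iterAvg G`. -/
lemma pack_structural (SS : SchreierSystem) (ζ : Ordinal) (G : Set ℕ → (ℕ →₀ ℝ))
    (hRA : RA SS ζ = fun N => iterAvg G N)
    (hG : ∀ N : Set ℕ, N.Infinite → (∀ s ∈ N, 0 < s) →
      (∀ i, 0 ≤ G N i) ∧ ((G N).sum fun _ v => v) = 1 ∧ (G N).support.Nonempty ∧
      ↑(G N).support ⊆ N ∧ (∀ s ∈ N, ∀ b ∈ (G N).support, s ≤ b → s ∈ (G N).support)) :
    ∀ N : Set ℕ, N.Infinite → (∀ s ∈ N, 0 < s) → ∀ n,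
      (∀ i, 0 ≤ RA SS ζ N n i) ∧ ((RA SS ζ N n).sum fun _ v => v) = 1 ∧
      (RA SS ζ N n).support.Nonempty ∧ ↑(RA SS ζ N n).support ⊆ lov SS ζ N n ∧
      (∀ s ∈ lov SS ζ N n, ∀ b ∈ (RA SS ζ N n).support, s ≤ b →
        s ∈ (RA SS ζ N n).support) := by
  intro N hN hpos n
  have h1 := RA_eq_G SS ζ G hRA N n
  have h2 := hG (lov SS ζ N n) (lov_infinite SS ζ hN n) (lov_pos SS ζ hpos n)
  rw [h1]
  exact ⟨h2.1, h2.2.1, h2.2.2.1, h2.2.2.2.1, h2.2.2.2.2⟩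

-- ===== geometric sum helper =====

lemma inv_sum_le (m : ℕ → ℕ) (h1 : ∀ n, 1 ≤ m n) (h2 : ∀ n, 2 * m n ≤ m (n + 1))
    (n₀ : ℕ) (K : Finset ℕ) (hK : ∀ n ∈ K, n₀ < n) :
    ∑ n ∈ K, (1 : ℝ) / (m n) ≤ 2 / m (n₀ + 1) := by
  have key : ∀ n, n₀ + 1 ≤ n → m (n₀ + 1) * 2 ^ (n - (n₀ + 1)) ≤ m n := by
    intro n hn
    induction n, hn using Nat.le_induction with
    | base => simp
    | succ n hn ih =>
      have : n + 1 - (n₀ + 1) = (n - (n₀ + 1)) + 1 := by omega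
      rw [this, pow_succ]
      calc m (n₀+1) * (2 ^ (n - (n₀+1)) * 2) = 2 * (m (n₀+1) * 2 ^ (n - (n₀+1))) := by ring
      _ ≤ 2 * m n := by omega
      _ ≤ m (n + 1) := h2 n
  have hpos : ∀ n, (0:ℝ) < m n := fun n => by exact_mod_cast Nat.lt_of_lt_of_le Nat.zero_lt_one (h1 n)
  have step : ∀ n ∈ K, (1 : ℝ) / m n ≤ (1/2) ^ (n - (n₀+1)) * (1 / m (n₀+1)) := by
    intro n hn
    have hk := key n (hK n hn)
    have hcast : (m (n₀+1) : ℝ) * 2 ^ (n - (n₀+1)) ≤ (m n : ℝ) := by exact_mod_cast hk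
    have e1 : ((1:ℝ)/2) ^ (n - (n₀+1)) * (1 / m (n₀+1)) =
        1 / (2 ^ (n - (n₀+1)) * m (n₀+1)) := by
      rw [div_pow, one_pow, div_mul_div_comm, one_mul]
    rw [e1]
    apply one_div_le_one_div_of_le (mul_pos (pow_pos two_pos _) (hpos (n₀+1)))
    calc (2:ℝ) ^ (n - (n₀+1)) * m (n₀+1) = (m (n₀+1):ℝ) * 2 ^ (n - (n₀+1)) := by ring
    _ ≤ (m n : ℝ) := hcast
  calc ∑ n ∈ K, (1:ℝ) / m n ≤ ∑ n ∈ K, (1/2 : ℝ) ^ (n - (n₀+1)) * (1 / m (n₀+1)) :=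
        Finset.sum_le_sum step
    _ = (∑ n ∈ K, (1/2 : ℝ) ^ (n - (n₀+1))) * (1 / m (n₀+1)) := by rw [Finset.sum_mul]
    _ ≤ 2 * (1 / m (n₀+1)) := by
        refine mul_le_mul_of_nonneg_right ?_ (by positivity)
        have himg : ∑ n ∈ K, (1/2 : ℝ) ^ (n - (n₀+1)) =
            ∑ d ∈ K.image (fun n => n - (n₀+1)), (1/2 : ℝ) ^ d := by
          rw [Finset.sum_image]
          intro a ha b hb hab
          have ha' := hK a ha; have hb' := hK b hb
          beta_reduce at hab
          omega
        rw [himg]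
        have hsub : K.image (fun n => n - (n₀+1)) ⊆
            Finset.range ((K.image (fun n => n - (n₀+1))).sup id + 1) := by
          intro d hd
          simp only [Finset.mem_range]
          exact Nat.lt_succ_of_le (Finset.le_sup (f := id) hd)
        calc ∑ d ∈ K.image (fun n => n - (n₀+1)), (1/2 : ℝ) ^ d
            ≤ ∑ d ∈ Finset.range ((K.image (fun n => n - (n₀+1))).sup id + 1), (1/2 : ℝ) ^ d :=
              Finset.sum_le_sum_of_subset_of_nonneg hsub (fun i _ _ => by positivity)
          _ ≤ 2 := sum_geometric_two_le _
    _ = 2 / m (n₀+1) := by ring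



-- ===== the central estimate =====

lemma est_core (SS : SchreierSystem) (ζ : Ordinal) (P0 : Pack0 SS ζ)
    {N : Set ℕ} (hN : N.Infinite) (hSI : SuperInc N)
    (hbound : ∀ E ∈ SS.S ζ, ∀ (n e : ℕ), e ∈ E → e < sInf (lov SS ζ N n) →
      ∑ i ∈ E, RA SS ζ N n i ≤ (e : ℝ) / (sInf (lov SS ζ N n))) :
    ∀ E ∈ SS.S ζ, ∀ J : Finset ℕ, ∑ n ∈ J, ∑ i ∈ E, RA SS ζ N n i ≤ 1 := by
  classical
  intro E hE J
  have hpos : ∀ s ∈ N, 0 < s := fun s hs => by have := hSI.1 s hs; omega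
  have hs0 : ∀ n, (0:ℝ) ≤ ∑ i ∈ E, RA SS ζ N n i :=
    fun n => Finset.sum_nonneg (fun i _ => P0.nonneg N hN hpos n i)
  have hJK : ∑ n ∈ J.filter (fun n => (∑ i ∈ E, RA SS ζ N n i) ≠ 0), ∑ i ∈ E, RA SS ζ N n i
      = ∑ n ∈ J, ∑ i ∈ E, RA SS ζ N n i := Finset.sum_filter_ne_zero J
  rw [← hJK]
  set K := J.filter (fun n => (∑ i ∈ E, RA SS ζ N n i) ≠ 0) with hKdef
  rcases K.eq_empty_or_nonempty with hKe | hKne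
  · rw [hKe]; simp
  set n₀ := K.min' hKne with hn₀
  have hn₀K : n₀ ∈ K := K.min'_mem hKne
  have hn₀min : ∀ n ∈ K, n₀ ≤ n := fun n hn => K.min'_le n hn
  have hKprop : ∀ n ∈ K, (∑ i ∈ E, RA SS ζ N n i) ≠ 0 :=
    fun n hn => (Finset.mem_filter.1 hn).2
  obtain ⟨e, heE, hexne⟩ := Finset.exists_ne_zero_of_sum_ne_zero (hKprop n₀ hn₀K)
  have heB : e ∈ (RA SS ζ N n₀).support := Finsupp.mem_support_iff.2 hexne
  have hmass := P0.mass N hN hpos n₀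
  have hsplit : ∑ n ∈ K, ∑ i ∈ E, RA SS ζ N n i
      = (∑ i ∈ E, RA SS ζ N n₀ i) + ∑ n ∈ K.erase n₀, ∑ i ∈ E, RA SS ζ N n i :=
    (Finset.add_sum_erase K _ hn₀K).symm
  rw [hsplit]
  by_cases hBE : (RA SS ζ N n₀).support ⊆ E
  · -- case A : the whole block is inside E; no other block meets E
    have hKerase : ∀ n ∈ K.erase n₀, False := by
      intro n hn
      have hnK := Finset.mem_of_mem_erase hn
      have hne := Finset.ne_of_mem_erase hn
      have hlt : n₀ < n := lt_of_le_of_ne (hn₀min n hnK) (Ne.symm hne)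
      obtain ⟨q, hqE, hqne⟩ := Finset.exists_ne_zero_of_sum_ne_zero (hKprop n hnK)
      have hqB : q ∈ (RA SS ζ N n).support := Finsupp.mem_support_iff.2 hqne
      obtain ⟨b, hbB, hqb⟩ := P0.maxS N hN hpos n₀ E hE hBE q hqE
      have := P0.blocks_lt hN hpos hlt hbB hqB
      omega
    have hKE : K.erase n₀ = ∅ := Finset.eq_empty_of_forall_notMem hKerase
    rw [hKE]
    simp only [Finset.sum_empty, add_zero]
    calc ∑ i ∈ E, RA SS ζ N n₀ i ≤ (RA SS ζ N n₀).sum fun _ v => v :=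
          sum_le_mass (P0.nonneg N hN hpos n₀) E
      _ = 1 := hmass
  · -- case B : the block is not contained in E
    obtain ⟨i₀, hi₀B, hi₀E⟩ : ∃ i₀, i₀ ∈ (RA SS ζ N n₀).support ∧ i₀ ∉ E := by
      by_contra hc; push_neg at hc; exact hBE (fun i hi => hc i hi)
    have h1 : ∑ i ∈ E, RA SS ζ N n₀ i ≤ 1 - RA SS ζ N n₀ i₀ := by
      have := sum_le_mass_sub (P0.nonneg N hN hpos n₀) E hi₀B hi₀E
      rw [hmass] at this; exact this
    have hBne := P0.supp_ne N hN hpos n₀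
    set T := (RA SS ζ N n₀).support.max' hBne with hT
    have hTB : T ∈ (RA SS ζ N n₀).support := (RA SS ζ N n₀).support.max'_mem hBne
    have hTmax : ∀ b ∈ (RA SS ζ N n₀).support, b ≤ T := fun b hb => Finset.le_max' _ b hb
    have hTN : T ∈ N := (lov_subset SS ζ N n₀) (P0.supp_sub N hN hpos n₀ hTB)
    have hT2 : 2 ≤ T := hSI.1 T hTN
    have heT : e ≤ T := hTmax e heB
    -- facts about the min sequence
    have hminfa : ∀ n, (lov SS ζ N n).Infinite := lov_infinite SS ζ hN
    have hmmem : ∀ n, sInf (lov SS ζ N n) ∈ lov SS ζ N n :=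
      fun n => Nat.sInf_mem (hminfa n).nonempty
    have hmN : ∀ n, sInf (lov SS ζ N n) ∈ N := fun n => (hmmem n).1
    have hm2 : ∀ n, 2 ≤ sInf (lov SS ζ N n) := fun n => hSI.1 _ (hmN n)
    have hmlt : ∀ n, sInf (lov SS ζ N n) < sInf (lov SS ζ N (n+1)) := by
      intro n
      have hBn := (P0.min_supp hN hpos n).1
      exact ((P0.mem_lov_iff hN hpos).1 (hmmem (n+1))).2 n (Nat.lt_succ_self n) _ hBn
    have hmono : StrictMono (fun n => sInf (lov SS ζ N n)) := strictMono_nat_of_lt_succ hmlt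
    have h2m : ∀ n, 2 * sInf (lov SS ζ N n) ≤ sInf (lov SS ζ N (n+1)) := by
      intro n
      have hsi := hSI.2 _ (hmN n) _ (hmN (n+1)) (hmlt n)
      have hp : sInf (lov SS ζ N n) ^ 2 ≤ sInf (lov SS ζ N n) ^ (sInf (lov SS ζ N n) + 2) :=
        Nat.pow_le_pow_right (by have := hm2 n; omega) (by omega)
      have h2 := hm2 n
      have hmul : 2 * sInf (lov SS ζ N n) ≤ sInf (lov SS ζ N n) * sInf (lov SS ζ N n) :=
        Nat.mul_le_mul_right _ h2
      have hsq : sInf (lov SS ζ N n) * sInf (lov SS ζ N n) = sInf (lov SS ζ N n) ^ 2 :=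
        (sq _).symm
      omega
    have hTm : T < sInf (lov SS ζ N (n₀+1)) :=
      ((P0.mem_lov_iff hN hpos).1 (hmmem (n₀+1))).2 n₀ (Nat.lt_succ_self n₀) T hTB
    have hTsuper : T ^ (T+2) ≤ sInf (lov SS ζ N (n₀+1)) := hSI.2 T hTN _ (hmN (n₀+1)) hTm
    -- tail bound
    have htail : ∀ n ∈ K.erase n₀,
        ∑ i ∈ E, RA SS ζ N n i ≤ (e:ℝ) * (1 / (↑(sInf (lov SS ζ N n)) : ℝ)) := by
      intro n hn
      have hnK := Finset.mem_of_mem_erase hn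
      have hlt : n₀ < n := lt_of_le_of_ne (hn₀min n hnK) (Ne.symm (Finset.ne_of_mem_erase hn))
      have hle : sInf (lov SS ζ N (n₀+1)) ≤ sInf (lov SS ζ N n) :=
        hmono.monotone (show n₀+1 ≤ n by omega)
      have he_lt : e < sInf (lov SS ζ N n) :=
        lt_of_lt_of_le (lt_of_le_of_lt heT hTm) hle
      calc ∑ i ∈ E, RA SS ζ N n i ≤ (e:ℝ) / sInf (lov SS ζ N n) := hbound E hE n e heE he_lt
        _ = (e:ℝ) * (1 / (↑(sInf (lov SS ζ N n)) : ℝ)) := by ring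
    have hKgt : ∀ n ∈ K.erase n₀, n₀ < n := fun n hn =>
      lt_of_le_of_ne (hn₀min n (Finset.mem_of_mem_erase hn))
        (Ne.symm (Finset.ne_of_mem_erase hn))
    have hsum_tail : ∑ n ∈ K.erase n₀, ∑ i ∈ E, RA SS ζ N n i
        ≤ (e:ℝ) * (2 / (↑(sInf (lov SS ζ N (n₀+1))) : ℝ)) := by
      calc ∑ n ∈ K.erase n₀, ∑ i ∈ E, RA SS ζ N n i
          ≤ ∑ n ∈ K.erase n₀, (e:ℝ) * (1 / (↑(sInf (lov SS ζ N n)) : ℝ)) := Finset.sum_le_sum htail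
        _ = (e:ℝ) * ∑ n ∈ K.erase n₀, (1 / (↑(sInf (lov SS ζ N n)) : ℝ)) := by
            rw [Finset.mul_sum]
        _ ≤ (e:ℝ) * (2 / (↑(sInf (lov SS ζ N (n₀+1))) : ℝ)) := by
            refine mul_le_mul_of_nonneg_left ?_ (by positivity)
            exact inv_sum_le (fun n => sInf (lov SS ζ N n)) (fun n => show 1 ≤ sInf (lov SS ζ N n) by have := hm2 n; omega)
              h2m n₀ (K.erase n₀) hKgt
    -- slack lower bound
    have hlb := P0.lb N hN hpos n₀ T hTB hTmax i₀ hi₀B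
    have hcard : (RA SS ζ N n₀).support.card ≤ T := by
      have hsub : (RA SS ζ N n₀).support ⊆ Finset.Icc 1 T := by
        intro b hb
        have hbN : b ∈ N := (lov_subset SS ζ N n₀) (P0.supp_sub N hN hpos n₀ hb)
        exact Finset.mem_Icc.2 ⟨hpos b hbN, hTmax b hb⟩
      calc (RA SS ζ N n₀).support.card ≤ (Finset.Icc 1 T).card := Finset.card_le_card hsub
        _ = T := by rw [Nat.card_Icc]; omega
    have hTR : (1:ℝ) ≤ (T:ℝ) := by exact_mod_cast le_trans one_le_two hT2
    have hTpowpos : (0:ℝ) < (T:ℝ) ^ ((RA SS ζ N n₀).support.card - 1) := by positivity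
    have hδ1 : ((T:ℝ) ^ ((RA SS ζ N n₀).support.card - 1))⁻¹ ≤ RA SS ζ N n₀ i₀ := by
      rw [inv_eq_one_div, div_le_iff₀ hTpowpos]
      calc (1:ℝ) ≤ (T:ℝ) ^ ((RA SS ζ N n₀).support.card - 1) * RA SS ζ N n₀ i₀ := hlb
        _ = RA SS ζ N n₀ i₀ * (T:ℝ) ^ ((RA SS ζ N n₀).support.card - 1) := by ring
    have hδ : ((T:ℝ) ^ (T - 1))⁻¹ ≤ RA SS ζ N n₀ i₀ := by
      refine le_trans ?_ hδ1
      have hple : (T:ℝ) ^ ((RA SS ζ N n₀).support.card - 1) ≤ (T:ℝ) ^ (T - 1) :=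
        pow_le_pow_right₀ hTR (by omega)
      exact inv_anti₀ hTpowpos hple
    -- final numeric bound
    have hmpluspos : (0:ℝ) < (↑(sInf (lov SS ζ N (n₀+1))) : ℝ) := by
      have := hm2 (n₀+1)
      have h0 : 0 < sInf (lov SS ζ N (n₀+1)) := by omega
      exact_mod_cast h0
    have hkeynat : 2 * T * T ^ (T-1) ≤ T ^ (T+2) := by
      have e1 : T * T ^ (T-1) = T ^ T := by
        rw [← pow_succ']
        congr 1
        omega
      have e2 : T ^ (T+2) = T ^ 2 * T ^ T := by rw [← pow_add]; congr 1; omega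
      have e3 : 2 ≤ T ^ 2 := by nlinarith
      calc 2 * T * T^(T-1) = 2 * (T * T^(T-1)) := by ring
        _ = 2 * T ^ T := by rw [e1]
        _ ≤ T^2 * T^T := Nat.mul_le_mul_right _ e3
        _ = T ^ (T+2) := e2.symm
    have hkey : (2:ℝ) * T * (T:ℝ)^(T-1) ≤ (↑(sInf (lov SS ζ N (n₀+1))) : ℝ) := by
      have := le_trans hkeynat hTsuper
      exact_mod_cast this
    have hnum : (e:ℝ) * (2 / (↑(sInf (lov SS ζ N (n₀+1))) : ℝ)) ≤ ((T:ℝ)^(T-1))⁻¹ := by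
      have hTpow2 : (0:ℝ) < (T:ℝ)^(T-1) := by positivity
      have h2' : (e:ℝ) * (2 / (↑(sInf (lov SS ζ N (n₀+1))) : ℝ)) = 2 * e / (↑(sInf (lov SS ζ N (n₀+1))) : ℝ) := by
        ring
      rw [h2', div_le_iff₀ hmpluspos, inv_eq_one_div, div_mul_eq_mul_div, one_mul,
        le_div_iff₀ hTpow2]
      calc 2 * (e:ℝ) * (T:ℝ)^(T-1) ≤ 2 * (T:ℝ) * (T:ℝ)^(T-1) := by
            have : (e:ℝ) ≤ (T:ℝ) := by exact_mod_cast heT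
            nlinarith
        _ ≤ (↑(sInf (lov SS ζ N (n₀+1))) : ℝ) := hkey
    have hfinal : ∑ n ∈ K.erase n₀, ∑ i ∈ E, RA SS ζ N n i ≤ RA SS ζ N n₀ i₀ :=
      le_trans hsum_tail (le_trans hnum hδ)
    linarith



-- ===== level 0 =====

lemma RA_zero_apply (SS : SchreierSystem) (N : Set ℕ) (n : ℕ) :
    RA SS 0 N n = Finsupp.single (Nat.nth (· ∈ N) n) (1 : ℝ) := by
  rw [RA_zero]

lemma supp_zero (SS : SchreierSystem) (N : Set ℕ) (n : ℕ) :
    (RA SS 0 N n).support = {Nat.nth (· ∈ N) n} := by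
  rw [RA_zero_apply]
  exact Finsupp.support_single_ne_zero _ one_ne_zero

lemma setOf_mem_eq' (N : Set ℕ) : {x : ℕ | x ∈ N} = N := rfl

lemma pack_zero (SS : SchreierSystem) : Pack SS 0 := by
  classical
  have hnth_mem : ∀ (N : Set ℕ), N.Infinite → ∀ n, Nat.nth (· ∈ N) n ∈ N :=
    fun N hN n => Nat.nth_mem_of_infinite hN n
  have hnth_inj : ∀ (N : Set ℕ), N.Infinite → ∀ (a b : ℕ),
      Nat.nth (· ∈ N) a = Nat.nth (· ∈ N) b → a = b :=
    fun N hN a b h => Nat.nth_injective hN h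
  refine ⟨⟨?_, ?_, ?_, ?_, ?_, ?_, ?_, ?_⟩, ?_⟩
  · -- nonneg
    intro N hN hpos n i
    rw [RA_zero_apply, Finsupp.single_apply]
    split <;> norm_num
  · -- mass
    intro N hN hpos n
    rw [RA_zero_apply]
    exact Finsupp.sum_single_index rfl
  · -- supp_ne
    intro N hN hpos n
    rw [supp_zero]
    exact Finset.singleton_nonempty _
  · -- supp_sub
    intro N hN hpos n
    rw [supp_zero]
    intro b hb
    simp only [Finset.coe_singleton, Set.mem_singleton_iff] at hb
    subst hb
    constructor
    · exact hnth_mem N hN n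
    · intro hc
      simp only [Set.mem_iUnion] at hc
      obtain ⟨i, hi, hmem⟩ := hc
      rw [supp_zero] at hmem
      simp only [Finset.coe_singleton, Set.mem_singleton_iff] at hmem
      exact absurd (hnth_inj N hN _ _ hmem.symm) (by omega)
  · -- initseg
    intro N hN hpos n s hs b hb hsb
    rw [supp_zero] at hb ⊢
    simp only [Finset.mem_singleton] at hb ⊢
    subst hb
    have hsN : s ∈ N := hs.1
    have hcount : Nat.nth (· ∈ N) (Nat.count (· ∈ N) s) = s := Nat.nth_count hsN
    by_cases hk : Nat.count (· ∈ N) s < n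
    · exfalso
      apply hs.2
      simp only [Set.mem_iUnion]
      refine ⟨Nat.count (· ∈ N) s, hk, ?_⟩
      rw [supp_zero]
      simp [hcount]
    · push_neg at hk
      have : Nat.nth (· ∈ N) n ≤ Nat.nth (· ∈ N) (Nat.count (· ∈ N) s) :=
        (Nat.nth_le_nth hN).2 hk
      omega
  · -- memS
    intro N hN hpos n
    rw [supp_zero]
    exact (S_zero_iff SS _).2 (Or.inr ⟨_, hpos _ (hnth_mem N hN n), rfl⟩)
  · -- maxS
    intro N hN hpos n F hF hsub q hq
    rw [supp_zero] at hsub ⊢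
    rcases (S_zero_iff SS F).1 hF with rfl | ⟨a, _, rfl⟩
    · exact absurd (hsub (Finset.mem_singleton_self _)) (by simp)
    · have h1 : Nat.nth (· ∈ N) n = a := by
        have := hsub (Finset.mem_singleton_self _)
        simpa using this
      simp only [Finset.mem_singleton] at hq
      exact ⟨Nat.nth (· ∈ N) n, Finset.mem_singleton_self _, by omega⟩
  · -- lb
    intro N hN hpos n T hT hTmax i hi
    rw [supp_zero] at hT hi
    simp only [Finset.mem_singleton] at hT hi
    subst hT; subst hi
    rw [supp_zero, RA_zero_apply]
    simp
  · -- est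
    intro N hN hSI E hE J
    rcases (S_zero_iff SS E).1 hE with rfl | ⟨a, ha, rfl⟩
    · simp
    · have hform : ∀ n, ∑ i ∈ ({a} : Finset ℕ), RA SS 0 N n i
          = if Nat.nth (· ∈ N) n = a then (1:ℝ) else 0 := by
        intro n
        rw [Finset.sum_singleton, RA_zero_apply, Finsupp.single_apply]
      calc ∑ n ∈ J, ∑ i ∈ ({a} : Finset ℕ), RA SS 0 N n i
          = ∑ n ∈ J, (if Nat.nth (· ∈ N) n = a then (1:ℝ) else 0) :=
            Finset.sum_congr rfl (fun n _ => hform n)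
        _ = ((J.filter (fun n => Nat.nth (· ∈ N) n = a)).card : ℝ) := by
            rw [Finset.sum_boole]
        _ ≤ 1 := by
            have hc : (J.filter (fun n => Nat.nth (· ∈ N) n = a)).card ≤ 1 := by
              refine Finset.card_le_one.2 (fun x hx y hy => ?_)
              have hx' := (Finset.mem_filter.1 hx).2
              have hy' := (Finset.mem_filter.1 hy).2
              exact hnth_inj N hN _ _ (hx'.trans hy'.symm)
            exact_mod_cast hc



-- ===== successor level =====

lemma biUnion_fin_range {k : ℕ} (f : ℕ → Finset ℕ) :
    Finset.univ.biUnion (fun j : Fin k => f j) = (Finset.range k).biUnion f := by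
  classical
  ext x
  simp only [Finset.mem_biUnion, Finset.mem_univ, true_and, Finset.mem_range]
  constructor
  · rintro ⟨j, hj⟩; exact ⟨j.val, j.isLt, hj⟩
  · rintro ⟨j, hj, hx⟩; exact ⟨⟨j, hj⟩, hx⟩

lemma blockLt_disjoint {k : ℕ} {Es : Fin k → Finset ℕ}
    (h : ∀ i j : Fin k, i < j → BlockLt (Es i) (Es j)) :
    ∀ i j : Fin k, i ≠ j → Disjoint (Es i) (Es j) := by
  intro i j hij
  rw [Finset.disjoint_left]
  intro x hxi hxj
  rcases lt_or_gt_of_ne hij with hlt | hgt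
  · exact lt_irrefl x (h i j hlt x hxi x hxj)
  · exact lt_irrefl x (h j i hgt x hxj x hxi)

section Succ

variable (SS : SchreierSystem) (ζ : Ordinal)

lemma Gsucc_apply (N' : Set ℕ) (i : ℕ) :
    Gsucc SS ζ N' i = ((sInf N' : ℕ) : ℝ)⁻¹ * ∑ j ∈ Finset.range (sInf N'), RA SS ζ N' j i := by
  show ((((sInf N' : ℕ) : ℝ)⁻¹ • ∑ j ∈ Finset.range (sInf N'), RA SS ζ N' j) : ℕ →₀ ℝ) i = _
  rw [Finsupp.smul_apply, Finsupp.finset_sum_apply, smul_eq_mul]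

variable {SS ζ} (Pζ : Pack0 SS ζ) {N' : Set ℕ} (hN' : N'.Infinite) (hpos' : ∀ s ∈ N', 0 < s)
include Pζ hN' hpos'

lemma sInf_pos' : 0 < sInf N' := hpos' _ (Nat.sInf_mem hN'.nonempty)

lemma Gsucc_nonneg : ∀ i, 0 ≤ Gsucc SS ζ N' i := by
  intro i
  rw [Gsucc_apply]
  have h1 : (0:ℝ) ≤ ((sInf N' : ℕ) : ℝ)⁻¹ := by positivity
  exact mul_nonneg h1 (Finset.sum_nonneg fun j _ => Pζ.nonneg N' hN' hpos' j i)

lemma Gsucc_support :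
    (Gsucc SS ζ N').support = (Finset.range (sInf N')).biUnion fun j => (RA SS ζ N' j).support := by
  classical
  have hm : 0 < sInf N' := sInf_pos' Pζ hN' hpos'
  have hc : ((sInf N' : ℕ) : ℝ)⁻¹ ≠ 0 := by positivity
  show ((((sInf N' : ℕ) : ℝ)⁻¹ • ∑ j ∈ Finset.range (sInf N'), RA SS ζ N' j) : ℕ →₀ ℝ).support = _
  rw [Finsupp.support_smul_eq hc]
  exact support_finset_sum_nonneg (fun j _ i => Pζ.nonneg N' hN' hpos' j i)

lemma Gsucc_mass : ((Gsucc SS ζ N').sum fun _ v => v) = 1 := by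
  have hm : 0 < sInf N' := sInf_pos' Pζ hN' hpos'
  show ((((sInf N' : ℕ) : ℝ)⁻¹ • ∑ j ∈ Finset.range (sInf N'), RA SS ζ N' j) : ℕ →₀ ℝ).sum
      (fun _ v => v) = 1
  rw [mass_smul, mass_finset_sum]
  have h1 : ∀ j ∈ Finset.range (sInf N'), ((RA SS ζ N' j).sum fun _ v => v) = 1 :=
    fun j _ => Pζ.mass N' hN' hpos' j
  rw [Finset.sum_congr rfl h1]
  simp only [Finset.sum_const, Finset.card_range, nsmul_eq_mul, mul_one]
  rw [inv_mul_cancel₀]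
  exact_mod_cast hm.ne'

lemma Gsucc_supp_ne : (Gsucc SS ζ N').support.Nonempty := by
  rw [Gsucc_support Pζ hN' hpos']
  obtain ⟨b, hb⟩ := Pζ.supp_ne N' hN' hpos' 0
  exact ⟨b, Finset.mem_biUnion.2 ⟨0, Finset.mem_range.2 (sInf_pos' Pζ hN' hpos'), hb⟩⟩

lemma Gsucc_supp_sub : ↑(Gsucc SS ζ N').support ⊆ N' := by
  rw [Gsucc_support Pζ hN' hpos']
  intro b hb
  simp only [Finset.coe_biUnion, Set.mem_iUnion, Finset.mem_coe, Finset.mem_range] at hb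
  obtain ⟨j, _, hbj⟩ := hb
  exact lov_subset SS ζ N' j (Pζ.supp_sub N' hN' hpos' j hbj)

lemma Gsucc_initseg : ∀ s ∈ N', ∀ b ∈ (Gsucc SS ζ N').support, s ≤ b →
    s ∈ (Gsucc SS ζ N').support := by
  intro s hsN b hb hsb
  rw [Gsucc_support Pζ hN' hpos'] at hb ⊢
  obtain ⟨j₁, hj₁, hbj₁⟩ := Finset.mem_biUnion.1 hb
  rw [Finset.mem_range] at hj₁
  clear hb
  induction j₁ using Nat.strong_induction_on generalizing b with
  | _ j₁ IH =>
    by_cases hex : ∃ i < j₁, ∃ c ∈ (RA SS ζ N' i).support, s ≤ c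
    · obtain ⟨i, hi, c, hc, hsc⟩ := hex
      exact IH i hi c hsc (lt_trans hi hj₁) hc
    · push_neg at hex
      have hslov : s ∈ lov SS ζ N' j₁ :=
        (Pζ.mem_lov_iff hN' hpos').2 ⟨hsN, hex⟩
      have hmem := Pζ.initseg N' hN' hpos' j₁ s hslov b hbj₁ hsb
      exact Finset.mem_biUnion.2 ⟨j₁, Finset.mem_range.2 hj₁, hmem⟩

end Succ

lemma Gsucc_hG (SS : SchreierSystem) (ζ : Ordinal) (Pζ : Pack0 SS ζ) :
    ∀ N' : Set ℕ, N'.Infinite → (∀ s ∈ N', 0 < s) →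
      (∀ i, 0 ≤ Gsucc SS ζ N' i) ∧ ((Gsucc SS ζ N').sum fun _ v => v) = 1 ∧
      (Gsucc SS ζ N').support.Nonempty ∧ ↑(Gsucc SS ζ N').support ⊆ N' ∧
      (∀ s ∈ N', ∀ b ∈ (Gsucc SS ζ N').support, s ≤ b → s ∈ (Gsucc SS ζ N').support) :=
  fun N' hN' hpos' => ⟨Gsucc_nonneg Pζ hN' hpos', Gsucc_mass Pζ hN' hpos',
    Gsucc_supp_ne Pζ hN' hpos', Gsucc_supp_sub Pζ hN' hpos', Gsucc_initseg Pζ hN' hpos'⟩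



lemma pack_succ (SS : SchreierSystem) (ζ : Ordinal) (Pζ : Pack SS ζ) : Pack SS (ζ + 1) := by
  classical
  have P0 := Pζ.toPack0
  have hRA := RA_succ' SS ζ
  have hG := Gsucc_hG SS ζ P0
  have hstruct := pack_structural SS (ζ+1) (Gsucc SS ζ) hRA hG
  have hval : ∀ N n, RA SS (ζ+1) N n = Gsucc SS ζ (lov SS (ζ+1) N n) := RA_eq_G SS (ζ+1) _ hRA
  have hsupp : ∀ (N : Set ℕ), N.Infinite → (∀ s ∈ N, 0 < s) → ∀ n,
      (RA SS (ζ+1) N n).support = (Finset.range (sInf (lov SS (ζ+1) N n))).biUnion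
        (fun j => (RA SS ζ (lov SS (ζ+1) N n) j).support) := by
    intro N hN hpos n
    rw [hval]
    exact Gsucc_support P0 (lov_infinite SS (ζ+1) hN n) (lov_pos SS (ζ+1) hpos n)
  have P0succ : Pack0 SS (ζ+1) := by
    refine ⟨fun N hN hpos n i => (hstruct N hN hpos n).1 i,
      fun N hN hpos n => (hstruct N hN hpos n).2.1,
      fun N hN hpos n => (hstruct N hN hpos n).2.2.1,
      fun N hN hpos n => (hstruct N hN hpos n).2.2.2.1,
      fun N hN hpos n => (hstruct N hN hpos n).2.2.2.2, ?memS, ?maxS, ?lb⟩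
    case memS =>
      intro N hN hpos n
      have hN'i : (lov SS (ζ+1) N n).Infinite := lov_infinite SS (ζ+1) hN n
      have hpos' : ∀ s ∈ lov SS (ζ+1) N n, 0 < s := lov_pos SS (ζ+1) hpos n
      have hm : 0 < sInf (lov SS (ζ+1) N n) := hpos' _ (Nat.sInf_mem hN'i.nonempty)
      refine (S_succ_iff SS ζ _).2 (Or.inr ⟨sInf (lov SS (ζ+1) N n),
        fun j : Fin (sInf (lov SS (ζ+1) N n)) => (RA SS ζ (lov SS (ζ+1) N n) (j : ℕ)).support,
        hm, ?_, ?_, ?_, ?_⟩)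
      · exact fun j => ⟨P0.supp_ne _ hN'i hpos' _, P0.memS _ hN'i hpos' _⟩
      · intro i j hij a ha b hb
        exact P0.blocks_lt hN'i hpos' (show (i:ℕ) < (j:ℕ) from hij) ha hb
      · intro q hq
        exact Nat.sInf_le ((hstruct N hN hpos n).2.2.2.1 hq)
      · rw [hsupp N hN hpos n]
        exact (biUnion_fin_range _).symm
    case maxS =>
      intro N hN hpos n F hF hsub q hq
      have hN'i : (lov SS (ζ+1) N n).Infinite := lov_infinite SS (ζ+1) hN n
      have hpos' : ∀ s ∈ lov SS (ζ+1) N n, 0 < s := lov_pos SS (ζ+1) hpos n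
      set N' := lov SS (ζ+1) N n with hN'def
      have hm : 0 < sInf N' := hpos' _ (Nat.sInf_mem hN'i.nonempty)
      have hsupp' : (RA SS (ζ+1) N n).support = (Finset.range (sInf N')).biUnion
          (fun j => (RA SS ζ N' j).support) := hsupp N hN hpos n
      by_contra hcon
      push_neg at hcon
      rcases (S_succ_iff SS ζ F).1 hF with rfl | ⟨k, Fs, hk, hFs, hblock, hkbound, hFeq⟩
      · exact absurd hq (by simp)
      have hμB : ∀ j, sInf (lov SS ζ N' j) ∈ (RA SS ζ N' j).support :=
        fun j => (P0.min_supp hN'i hpos' j).1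
      have hμmin : ∀ j, ∀ b ∈ (RA SS ζ N' j).support, sInf (lov SS ζ N' j) ≤ b :=
        fun j => (P0.min_supp hN'i hpos' j).2
      have hμmono : ∀ {j j' : ℕ}, j < j' → sInf (lov SS ζ N' j) < sInf (lov SS ζ N' j') :=
        fun {j j'} hjj => P0.blocks_lt hN'i hpos' hjj (hμB _) (hμB _)
      have hBsupp : ∀ j < sInf N', ∀ b ∈ (RA SS ζ N' j).support,
          b ∈ (RA SS (ζ+1) N n).support := by
        intro j hj b hb
        rw [hsupp']
        exact Finset.mem_biUnion.2 ⟨j, Finset.mem_range.2 hj, hb⟩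
      have hBF : ∀ j < sInf N', ∀ b ∈ (RA SS ζ N' j).support, b ∈ F :=
        fun j hj b hb => hsub (hBsupp j hj b hb)
      have hμ0 : sInf (lov SS ζ N' 0) = sInf N' := by rw [lov_zero]
      have hkm : k ≤ sInf N' := by
        have := hkbound _ (hBF 0 hm _ (hμB 0))
        omega
      have ham : ∀ (i : Fin k) (x y z : ℕ), x ∈ Fs i → z ∈ Fs i → y ∈ F →
          x ≤ y → y ≤ z → y ∈ Fs i := by
        intro i x y z hx hz hyF hxy hyz
        have h1 : y ∈ Finset.univ.biUnion Fs := hFeq ▸ hyF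
        obtain ⟨l, _, hyl⟩ := Finset.mem_biUnion.1 h1
        rcases lt_trichotomy l i with hli | rfl | hil
        · exact absurd (hblock l i hli y hyl x hx) (by omega)
        · exact hyl
        · exact absurd (hblock i l hil z hz y hyl) (by omega)
      have hex : ∀ j : Fin (sInf N'), ∃ i : Fin k, sInf (lov SS ζ N' (j:ℕ)) ∈ Fs i := by
        intro j
        have h1 : sInf (lov SS ζ N' (j:ℕ)) ∈ F := hBF _ j.isLt _ (hμB _)
        have h2 : _ ∈ Finset.univ.biUnion Fs := hFeq ▸ h1
        obtain ⟨i, _, hi⟩ := Finset.mem_biUnion.1 h2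
        exact ⟨i, hi⟩
      choose ψ hψ using hex
      have hψmono : StrictMono ψ := by
        intro j j' hjj
        by_contra hc
        push_neg at hc
        rcases eq_or_lt_of_le hc with heq | hlt
        · have hBsub : ∀ c ∈ (RA SS ζ N' (j:ℕ)).support, c ∈ Fs (ψ j) := by
            intro c hc'
            have hcF : c ∈ F := hBF _ j.isLt c hc'
            have h1 : sInf (lov SS ζ N' (j:ℕ)) ≤ c := hμmin _ c hc'
            have h2 : c ≤ sInf (lov SS ζ N' (j':ℕ)) :=
              le_of_lt (P0.blocks_lt hN'i hpos' (show (j:ℕ) < (j':ℕ) from hjj) hc' (hμB _))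
            exact ham (ψ j) _ c _ (hψ j) (heq ▸ hψ j') hcF h1 h2
          obtain ⟨b, hbB, hqb⟩ := P0.maxS N' hN'i hpos' j (Fs (ψ j)) ((hFs (ψ j)).2)
            hBsub _ (heq ▸ hψ j')
          have := P0.blocks_lt hN'i hpos' (show (j:ℕ) < (j':ℕ) from hjj) hbB (hμB _)
          omega
        · have h1 := hblock (ψ j') (ψ j) hlt _ (hψ j') _ (hψ j)
          have h2 := hμmono (show (j:ℕ) < (j':ℕ) from hjj)
          omega
      have hinj : Function.Injective ψ := hψmono.injective
      have hmk : sInf N' ≤ k := by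
        have := Fintype.card_le_of_injective ψ hinj
        simpa using this
      have hkm' : k = sInf N' := le_antisymm hkm hmk
      subst hkm'
      have hsurj : Function.Surjective ψ := Finite.injective_iff_surjective.1 hinj
      have h1 : q ∈ Finset.univ.biUnion Fs := hFeq ▸ hq
      obtain ⟨iq, _, hqFs⟩ := Finset.mem_biUnion.1 h1
      obtain ⟨jstar, hjstar⟩ := hsurj iq
      have hBsub : ∀ c ∈ (RA SS ζ N' (jstar:ℕ)).support, c ∈ Fs iq := by
        intro c hc'
        have hcF : c ∈ F := hBF _ jstar.isLt c hc'
        have h1 : sInf (lov SS ζ N' (jstar:ℕ)) ≤ c := hμmin _ c hc'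
        have h2 : c ≤ q := le_of_lt (hcon c (hBsupp _ jstar.isLt c hc'))
        exact ham iq _ c q (hjstar ▸ hψ jstar) hqFs hcF h1 h2
      obtain ⟨b, hbB, hqb⟩ := P0.maxS N' hN'i hpos' jstar (Fs iq) ((hFs iq).2) hBsub q hqFs
      have := hcon b (hBsupp _ jstar.isLt b hbB)
      omega
    case lb =>
      intro N hN hpos n T hTB hTmax i hi
      have hN'i : (lov SS (ζ+1) N n).Infinite := lov_infinite SS (ζ+1) hN n
      have hpos' : ∀ s ∈ lov SS (ζ+1) N n, 0 < s := lov_pos SS (ζ+1) hpos n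
      set N' := lov SS (ζ+1) N n with hN'def
      have hm : 0 < sInf N' := hpos' _ (Nat.sInf_mem hN'i.nonempty)
      have hsupp' : (RA SS (ζ+1) N n).support = (Finset.range (sInf N')).biUnion
          (fun j => (RA SS ζ N' j).support) := hsupp N hN hpos n
      rw [hsupp'] at hi
      obtain ⟨j, hjr, hij⟩ := Finset.mem_biUnion.1 hi
      rw [Finset.mem_range] at hjr
      have hBjne : (RA SS ζ N' j).support.Nonempty := P0.supp_ne N' hN'i hpos' j
      set Tj := (RA SS ζ N' j).support.max' hBjne with hTj
      have hTjB : Tj ∈ (RA SS ζ N' j).support := Finset.max'_mem _ _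
      have hTjmax : ∀ b ∈ (RA SS ζ N' j).support, b ≤ Tj := fun b hb => Finset.le_max' _ b hb
      have hTj_le_T : Tj ≤ T := hTmax Tj (by
        rw [hsupp']; exact Finset.mem_biUnion.2 ⟨j, Finset.mem_range.2 hjr, hTjB⟩)
      have hIH : 1 ≤ (Tj:ℝ) ^ ((RA SS ζ N' j).support.card - 1) * RA SS ζ N' j i :=
        P0.lb N' hN'i hpos' j Tj hTjB hTjmax i hij
      have hynn : (0:ℝ) ≤ RA SS ζ N' j i := P0.nonneg N' hN'i hpos' j i
      have hxi : ((sInf N' : ℕ):ℝ)⁻¹ * RA SS ζ N' j i ≤ RA SS (ζ+1) N n i := by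
        rw [hval, Gsucc_apply]
        refine mul_le_mul_of_nonneg_left ?_ (by positivity)
        exact Finset.single_le_sum (f := fun j' => RA SS ζ N' j' i)
          (fun j' _ => P0.nonneg N' hN'i hpos' j' i) (Finset.mem_range.2 hjr)
      -- cardinalities
      have hdisj : Set.PairwiseDisjoint ↑(Finset.range (sInf N'))
          (fun j' => (RA SS ζ N' j').support) := by
        intro a _ b _ hab
        rw [Function.onFun, Finset.disjoint_left]
        intro x hxa hxb
        have := P0.apply_eq_zero_of_ne hN'i hpos' hab hxa
        exact absurd this (Finsupp.mem_support_iff.1 hxb)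
      have hcard_sum : (RA SS (ζ+1) N n).support.card
          = ∑ j' ∈ Finset.range (sInf N'), (RA SS ζ N' j').support.card := by
        rw [hsupp']
        exact Finset.card_biUnion (fun a ha b hb hab => hdisj ha hb hab)
      have hcards1 : ∀ j' ∈ Finset.range (sInf N'), 1 ≤ (RA SS ζ N' j').support.card :=
        fun j' _ => Finset.card_pos.2 (P0.supp_ne N' hN'i hpos' j')
      have hcB_ge : (RA SS ζ N' j).support.card + (sInf N' - 1)
          ≤ (RA SS (ζ+1) N n).support.card := by
        rw [hcard_sum]
        rw [← Finset.sum_erase_add _ _ (Finset.mem_range.2 hjr)]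
        have h1 : sInf N' - 1 ≤ ∑ j' ∈ (Finset.range (sInf N')).erase j,
            (RA SS ζ N' j').support.card := by
          calc sInf N' - 1 = ((Finset.range (sInf N')).erase j).card := by
                rw [Finset.card_erase_of_mem (Finset.mem_range.2 hjr), Finset.card_range]
            _ = ∑ _j' ∈ (Finset.range (sInf N')).erase j, 1 :=
                (Finset.card_eq_sum_ones _)
            _ ≤ ∑ j' ∈ (Finset.range (sInf N')).erase j, (RA SS ζ N' j').support.card :=
                Finset.sum_le_sum (fun j' hj' => hcards1 j' (Finset.mem_of_mem_erase hj'))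
        omega
      -- positivity and size facts
      have hTN : T ∈ N := (lov_subset SS (ζ+1) N n) ((hstruct N hN hpos n).2.2.2.1 hTB)
      have hT1 : 1 ≤ T := hpos T hTN
      have hmT : sInf N' ≤ T := by
        refine hTmax _ ?_
        rw [hsupp']
        refine Finset.mem_biUnion.2 ⟨0, Finset.mem_range.2 hm, ?_⟩
        have h0 := (P0.min_supp hN'i hpos' 0).1
        rwa [lov_zero] at h0
      have hTjnn : (0:ℝ) ≤ (Tj:ℝ) := by positivity
      have hTR1 : (1:ℝ) ≤ (T:ℝ) := by exact_mod_cast hT1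
      have hcj1 : 1 ≤ (RA SS ζ N' j).support.card := hcards1 j (Finset.mem_range.2 hjr)
      have hsplitexp : (RA SS (ζ+1) N n).support.card - 1 =
          ((RA SS (ζ+1) N n).support.card - 1 - ((RA SS ζ N' j).support.card - 1))
          + ((RA SS ζ N' j).support.card - 1) := by omega
      have hexp_ge : sInf N' - 1 ≤ (RA SS (ζ+1) N n).support.card - 1
          - ((RA SS ζ N' j).support.card - 1) := by omega
      have hnat : sInf N' ≤ T ^ (sInf N' - 1) := by
        rcases Nat.lt_or_ge (sInf N') 2 with h2 | h2
        · have h1' : sInf N' = 1 := by omega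
          simp [h1']
        · calc sInf N' ≤ sInf N' ^ (sInf N' - 1) := Nat.le_self_pow (by omega) _
            _ ≤ T ^ (sInf N' - 1) := Nat.pow_le_pow_left hmT _
      have hmpow : ((sInf N' : ℕ) : ℝ) ≤ (T:ℝ) ^ ((RA SS (ζ+1) N n).support.card - 1
          - ((RA SS ζ N' j).support.card - 1)) := by
        calc ((sInf N' : ℕ) : ℝ) ≤ (T:ℝ) ^ (sInf N' - 1) := by exact_mod_cast hnat
          _ ≤ (T:ℝ) ^ ((RA SS (ζ+1) N n).support.card - 1
              - ((RA SS ζ N' j).support.card - 1)) := pow_le_pow_right₀ hTR1 hexp_ge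
      have hIH' : 1 ≤ (T:ℝ) ^ ((RA SS ζ N' j).support.card - 1) * RA SS ζ N' j i := by
        refine le_trans hIH ?_
        refine mul_le_mul_of_nonneg_right ?_ hynn
        exact pow_le_pow_left₀ hTjnn (by exact_mod_cast hTj_le_T) _
      have hmR : (0:ℝ) < ((sInf N' : ℕ) : ℝ) := by exact_mod_cast hm
      have h1 : (1:ℝ) ≤ (T:ℝ) ^ ((RA SS (ζ+1) N n).support.card - 1
          - ((RA SS ζ N' j).support.card - 1)) * (((sInf N' : ℕ):ℝ))⁻¹ := by
        rw [← mul_inv_cancel₀ hmR.ne']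
        exact mul_le_mul_of_nonneg_right hmpow (by positivity)
      calc (1:ℝ) = 1 * 1 := by ring
        _ ≤ ((T:ℝ) ^ ((RA SS (ζ+1) N n).support.card - 1
              - ((RA SS ζ N' j).support.card - 1)) * (((sInf N' : ℕ):ℝ))⁻¹)
            * ((T:ℝ) ^ ((RA SS ζ N' j).support.card - 1) * RA SS ζ N' j i) :=
            mul_le_mul h1 hIH' (by norm_num) (le_trans zero_le_one h1)
        _ = ((T:ℝ) ^ ((RA SS (ζ+1) N n).support.card - 1
              - ((RA SS ζ N' j).support.card - 1))
            * (T:ℝ) ^ ((RA SS ζ N' j).support.card - 1))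
            * ((((sInf N' : ℕ)):ℝ)⁻¹ * RA SS ζ N' j i) := by ring
        _ ≤ ((T:ℝ) ^ ((RA SS (ζ+1) N n).support.card - 1
              - ((RA SS ζ N' j).support.card - 1))
            * (T:ℝ) ^ ((RA SS ζ N' j).support.card - 1))
            * RA SS (ζ+1) N n i := by
            refine mul_le_mul_of_nonneg_left hxi (by positivity)
        _ = (T:ℝ) ^ ((RA SS (ζ+1) N n).support.card - 1) * RA SS (ζ+1) N n i := by
            rw [← pow_add, ← hsplitexp]
  -- est field
  refine ⟨P0succ, ?_⟩
  intro N hN hSI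
  refine est_core SS (ζ+1) P0succ hN hSI ?_
  intro E hE n e heE helt
  have hN'i : (lov SS (ζ+1) N n).Infinite := lov_infinite SS (ζ+1) hN n
  have hpos : ∀ s ∈ N, 0 < s := fun s hs => by have := hSI.1 s hs; omega
  have hpos' : ∀ s ∈ lov SS (ζ+1) N n, 0 < s := lov_pos SS (ζ+1) hpos n
  set N' := lov SS (ζ+1) N n with hN'def
  have hm : 0 < sInf N' := hpos' _ (Nat.sInf_mem hN'i.nonempty)
  have hmR : (0:ℝ) < ((sInf N' : ℕ) : ℝ) := by exact_mod_cast hm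
  rcases (S_succ_iff SS ζ E).1 hE with rfl | ⟨k, Es, hk, hEs, hblockE, hkbound, hEeq⟩
  · exact absurd heE (by simp)
  have hke : k ≤ e := hkbound e heE
  have hdisjE : Set.PairwiseDisjoint ↑(Finset.univ : Finset (Fin k)) Es :=
    fun a _ b _ hab => blockLt_disjoint hblockE a b hab
  have hEsum : ∀ j, ∑ i ∈ E, RA SS ζ N' j i = ∑ l : Fin k, ∑ i ∈ Es l, RA SS ζ N' j i := by
    intro j
    rw [hEeq]
    exact Finset.sum_biUnion hdisjE
  have hinner : ∑ j ∈ Finset.range (sInf N'), ∑ i ∈ E, RA SS ζ N' j i ≤ (k:ℝ) := by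
    rw [Finset.sum_congr rfl (fun j _ => hEsum j), Finset.sum_comm]
    calc ∑ l : Fin k, ∑ j ∈ Finset.range (sInf N'), ∑ i ∈ Es l, RA SS ζ N' j i
        ≤ ∑ _l : Fin k, (1:ℝ) := Finset.sum_le_sum (fun l _ =>
          Pζ.est N' hN'i (hSI.subset (lov_subset SS (ζ+1) N n)) (Es l) ((hEs l).2)
            (Finset.range (sInf N')))
      _ = (k:ℝ) := by simp
  calc ∑ i ∈ E, RA SS (ζ+1) N n i
      = ∑ i ∈ E, ((sInf N' : ℕ):ℝ)⁻¹ * ∑ j ∈ Finset.range (sInf N'), RA SS ζ N' j i := by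
        refine Finset.sum_congr rfl (fun i _ => ?_)
        rw [hval N n, Gsucc_apply]
    _ = ((sInf N' : ℕ):ℝ)⁻¹ * ∑ j ∈ Finset.range (sInf N'), ∑ i ∈ E, RA SS ζ N' j i := by
        rw [← Finset.mul_sum, Finset.sum_comm]
    _ ≤ ((sInf N' : ℕ):ℝ)⁻¹ * (k:ℝ) := by
        refine mul_le_mul_of_nonneg_left hinner (by positivity)
    _ ≤ (e:ℝ) / (sInf (lov SS (ζ+1) N n)) := by
        rw [← hN'def, div_eq_mul_inv, mul_comm ((e:ℝ))]
        refine mul_le_mul_of_nonneg_left ?_ (by positivity)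
        exact_mod_cast hke



lemma RA_succ_zero (SS : SchreierSystem) (γ : Ordinal) (N' : Set ℕ) :
    RA SS (γ + 1) N' 0 = Gsucc SS γ N' := by
  rw [RA_eq_G SS (γ+1) _ (RA_succ' SS γ), lov_zero]

lemma pack_limit (SS : SchreierSystem) (ζ : Ordinal) (hζ : ζ < omega1) (hlim : Order.IsSuccLimit ζ)
    (IH : ∀ β < ζ, Pack SS β) : Pack SS ζ := by
  classical
  have hRA := RA_limit' SS ζ hlim
  have hγlt : ∀ k : ℕ, SS.limSeq ζ k + 1 < ζ := by
    intro k
    have h1 := SS.limSeq_lt ζ hζ hlim k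
    rw [Ordinal.add_one_eq_succ]
    exact hlim.succ_lt h1
  have hγω : ∀ k : ℕ, SS.limSeq ζ k + 1 < omega1 := fun k => lt_trans (hγlt k) hζ
  have hGval : ∀ N' : Set ℕ, Glim SS ζ N' = RA SS (SS.limSeq ζ (sInf N') + 1) N' 0 := by
    intro N'
    show (if h : SS.limSeq ζ (sInf N') + 1 < ζ then _ else 0) = _
    rw [dif_pos (hγlt (sInf N'))]
  have hval : ∀ (N : Set ℕ) (n : ℕ), RA SS ζ N n
      = RA SS (SS.limSeq ζ (sInf (lov SS ζ N n)) + 1) (lov SS ζ N n) 0 := by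
    intro N n
    rw [RA_eq_G SS ζ _ hRA, hGval]
  have hG : ∀ N' : Set ℕ, N'.Infinite → (∀ s ∈ N', 0 < s) →
      (∀ i, 0 ≤ Glim SS ζ N' i) ∧ ((Glim SS ζ N').sum fun _ v => v) = 1 ∧
      (Glim SS ζ N').support.Nonempty ∧ ↑(Glim SS ζ N').support ⊆ N' ∧
      (∀ s ∈ N', ∀ b ∈ (Glim SS ζ N').support, s ≤ b → s ∈ (Glim SS ζ N').support) := by
    intro N' hN' hpos'
    have P := IH _ (hγlt (sInf N'))
    rw [hGval]
    refine ⟨fun i => P.nonneg N' hN' hpos' 0 i, P.mass N' hN' hpos' 0,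
      P.supp_ne N' hN' hpos' 0, ?_, ?_⟩
    · have h1 := P.supp_sub N' hN' hpos' 0
      rwa [lov_zero] at h1
    · intro s hs b hb hsb
      refine P.initseg N' hN' hpos' 0 s ?_ b hb hsb
      rw [lov_zero]
      exact hs
  have hstruct := pack_structural SS ζ (Glim SS ζ) hRA hG
  have P0lim : Pack0 SS ζ := by
    refine ⟨fun N hN hpos n i => (hstruct N hN hpos n).1 i,
      fun N hN hpos n => (hstruct N hN hpos n).2.1,
      fun N hN hpos n => (hstruct N hN hpos n).2.2.1,
      fun N hN hpos n => (hstruct N hN hpos n).2.2.2.1,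
      fun N hN hpos n => (hstruct N hN hpos n).2.2.2.2, ?memS, ?maxS, ?lb⟩
    case memS =>
      intro N hN hpos n
      have hN'i : (lov SS ζ N n).Infinite := lov_infinite SS ζ hN n
      have hpos' : ∀ s ∈ lov SS ζ N n, 0 < s := lov_pos SS ζ hpos n
      have P := IH _ (hγlt (sInf (lov SS ζ N n)))
      refine (S_lim_iff SS hζ hlim _).2 (Or.inr ⟨(hstruct N hN hpos n).2.2.1,
        sInf (lov SS ζ N n), ?_, ?_⟩)
      · intro m hm
        exact Nat.sInf_le ((hstruct N hN hpos n).2.2.2.1 hm)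
      · rw [hval N n]
        exact P.memS (lov SS ζ N n) hN'i hpos' 0
    case maxS =>
      intro N hN hpos n F hF hsub q hq
      have hN'i : (lov SS ζ N n).Infinite := lov_infinite SS ζ hN n
      have hpos' : ∀ s ∈ lov SS ζ N n, 0 < s := lov_pos SS ζ hpos n
      have P := IH _ (hγlt (sInf (lov SS ζ N n)))
      rcases (S_lim_iff SS hζ hlim F).1 hF with rfl | ⟨hFne, n', hn'bound, hF'⟩
      · exact absurd hq (by simp)
      have hminB : sInf (lov SS ζ N n) ∈ (RA SS ζ N n).support := by
        rw [hval N n]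
        have h1 := (P.toPack0.min_supp hN'i hpos' 0).1
        rwa [lov_zero] at h1
      have hn'le : n' ≤ sInf (lov SS ζ N n) := hn'bound _ (hsub hminB)
      have hF'' : F ∈ SS.S (SS.limSeq ζ (sInf (lov SS ζ N n)) + 1) :=
        S_chain SS hζ hlim n' _ hn'le hF'
      rw [hval N n] at hsub ⊢
      exact P.maxS (lov SS ζ N n) hN'i hpos' 0 F hF'' hsub q hq
    case lb =>
      intro N hN hpos n T hTB hTmax i hi
      have hN'i : (lov SS ζ N n).Infinite := lov_infinite SS ζ hN n
      have hpos' : ∀ s ∈ lov SS ζ N n, 0 < s := lov_pos SS ζ hpos n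
      have P := IH _ (hγlt (sInf (lov SS ζ N n)))
      rw [hval N n] at hTB hTmax hi ⊢
      exact P.lb (lov SS ζ N n) hN'i hpos' 0 T hTB hTmax i hi
  refine ⟨P0lim, ?_⟩
  intro N hN hSI
  refine est_core SS ζ P0lim hN hSI ?_
  intro E hE n e heE helt
  have hpos : ∀ s ∈ N, 0 < s := fun s hs => by have := hSI.1 s hs; omega
  have hN'i : (lov SS ζ N n).Infinite := lov_infinite SS ζ hN n
  have hpos' : ∀ s ∈ lov SS ζ N n, 0 < s := lov_pos SS ζ hpos n
  set N' := lov SS ζ N n with hN'def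
  have hm : 0 < sInf N' := hpos' _ (Nat.sInf_mem hN'i.nonempty)
  have hmR : (0:ℝ) < ((sInf N' : ℕ) : ℝ) := by exact_mod_cast hm
  rcases (S_lim_iff SS hζ hlim E).1 hE with rfl | ⟨hEne, n', hn'bound, hE'⟩
  · exact absurd heE (by simp)
  have hn'e : n' ≤ e := hn'bound e heE
  have hn'm : n' < sInf N' := by omega
  have hEγ : E ∈ SS.S (SS.limSeq ζ (sInf N')) := S_chain' SS hζ hlim hn'm hE'
  have Pγ : Pack SS (SS.limSeq ζ (sInf N')) := IH _ (SS.limSeq_lt ζ hζ hlim (sInf N'))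
  have he1 : 1 ≤ e := S_pos SS hζ hE e heE
  have heR : (1:ℝ) ≤ (e:ℝ) := by exact_mod_cast he1
  have hinner : ∑ j ∈ Finset.range (sInf N'),
      ∑ i ∈ E, RA SS (SS.limSeq ζ (sInf N')) N' j i ≤ 1 := by
    have h1 := Pγ.est N' hN'i (hSI.subset (lov_subset SS ζ N n)) E hEγ (Finset.range (sInf N'))
    calc ∑ j ∈ Finset.range (sInf N'), ∑ i ∈ E, RA SS (SS.limSeq ζ (sInf N')) N' j i
        = ∑ j ∈ Finset.range (sInf N'), ∑ i ∈ E, RA SS (SS.limSeq ζ (sInf N')) N' j i := rfl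
      _ ≤ 1 := h1
  calc ∑ i ∈ E, RA SS ζ N n i
      = ∑ i ∈ E, ((sInf N' : ℕ):ℝ)⁻¹ * ∑ j ∈ Finset.range (sInf N'),
          RA SS (SS.limSeq ζ (sInf N')) N' j i := by
        refine Finset.sum_congr rfl (fun i _ => ?_)
        rw [hval N n, ← hN'def, RA_succ_zero, Gsucc_apply]
    _ = ((sInf N' : ℕ):ℝ)⁻¹ * ∑ j ∈ Finset.range (sInf N'),
          ∑ i ∈ E, RA SS (SS.limSeq ζ (sInf N')) N' j i := by
        rw [← Finset.mul_sum, Finset.sum_comm]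
    _ ≤ ((sInf N' : ℕ):ℝ)⁻¹ * 1 := mul_le_mul_of_nonneg_left hinner (by positivity)
    _ ≤ (e:ℝ) / (sInf (lov SS ζ N n)) := by
        rw [← hN'def, div_eq_mul_inv]
        calc ((sInf N' : ℕ):ℝ)⁻¹ * 1 = 1 * ((sInf N' : ℕ):ℝ)⁻¹ := by ring
          _ ≤ (e:ℝ) * ((sInf N' : ℕ):ℝ)⁻¹ :=
            mul_le_mul_of_nonneg_right heR (by positivity)


theorem pack_all (SS : SchreierSystem) : ∀ ζ : Ordinal, ζ < omega1 → Pack SS ζ := by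
  intro ζ
  induction ζ using Ordinal.induction with
  | _ ζ IH =>
    intro hζ
    rcases Ordinal.zero_or_succ_or_isSuccLimit ζ with rfl | ⟨ζ', rfl⟩ | hlim
    · exact pack_zero SS
    · have h1 : ζ' < Order.succ ζ' := Order.lt_succ_of_not_isMax (not_isMax ζ')
      rw [← Ordinal.add_one_eq_succ]
      exact pack_succ SS ζ' (IH ζ' h1 (lt_trans h1 hζ))
    · exact pack_limit SS ζ hζ hlim (fun β hβ => IH β hβ (lt_trans hβ hζ))

lemma exists_superinc (L : Set ℕ) (hL : L.Infinite) :
    ∃ M : Set ℕ, M ⊆ L ∧ M.Infinite ∧ SuperInc M := by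
  classical
  have hLgt : ∀ b : ℕ, ∃ a, a ∈ L ∧ b < a := by
    intro b
    by_contra hc
    push_neg at hc
    exact hL ((Set.finite_Iic b).subset (fun x hx => Set.mem_Iic.2 (hc x hx)))
  choose g hg1 hg2 using hLgt
  set f : ℕ → ℕ := fun k => Nat.rec (g 1) (fun _ prev => g (prev ^ (prev + 2))) k with hf
  have hf0 : f 0 = g 1 := rfl
  have hfs : ∀ k, f (k+1) = g (f k ^ (f k + 2)) := fun k => rfl
  have hfL : ∀ k, f k ∈ L := by
    intro k
    cases k with
    | zero => exact hg1 1
    | succ k => rw [hfs]; exact hg1 _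
  have hf1 : ∀ k, 1 < f k := by
    intro k
    induction k with
    | zero => exact hg2 1
    | succ k ih =>
      have h1 : f k ≤ f k ^ (f k + 2) := Nat.le_self_pow (by omega) _
      have h2 := hg2 (f k ^ (f k + 2))
      rw [hfs]
      omega
  have hsup : ∀ k, f k ^ (f k + 2) < f (k+1) := fun k => by rw [hfs]; exact hg2 _
  have hfmono : StrictMono f := by
    refine strictMono_nat_of_lt_succ (fun k => ?_)
    have h1 : f k ≤ f k ^ (f k + 2) := Nat.le_self_pow (by omega) _
    have := hsup k
    omega
  refine ⟨Set.range f, ?_, Set.infinite_range_of_injective hfmono.injective, ?_, ?_⟩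
  · rintro x ⟨k, rfl⟩; exact hfL k
  · rintro s ⟨k, rfl⟩; have := hf1 k; omega
  · rintro x ⟨i, rfl⟩ y ⟨j, rfl⟩ hxy
    have hij : i < j := hfmono.lt_iff_lt.1 hxy
    have h1 : f (i+1) ≤ f j := hfmono.monotone (show i + 1 ≤ j by omega)
    exact le_trans (hsup i).le h1




/-- Corollary `isometricc0` of the paper. For every `ξ < ω₁` and
every infinite `L` there is an infinite `M ⊆ L` such that the repeated-average vectors
`x_n = ∑_i 𝕊^ξ_{M,n}(i) e^ξ_i` are isometrically equivalent in `X_ξ` to the canonical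
basis of `c₀`: `‖∑_n a_n x_n‖_ξ = max_n |a_n|` for all finitely supported scalars. -/
theorem statement16 (SS : SchreierSystem) (ξ : Ordinal) (hξ : ξ < omega1)
    (L : Set ℕ) (hL : L.Infinite) (hLpos : ∀ m ∈ L, 0 < m) :
    ∃ M : Set ℕ, M ⊆ L ∧ M.Infinite ∧
      ∀ a : ℕ →₀ ℝ, schreierNorm SS ξ (combo (fun n => RA SS ξ M n) a)
        = sSup (Set.range fun n => |a n|) := by
  classical
  obtain ⟨M, hML, hMI, hSI⟩ := exists_superinc L hL
  have P := pack_all SS ξ hξ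
  have hMpos : ∀ s ∈ M, 0 < s := fun s hs => by have := hSI.1 s hs; omega
  refine ⟨M, hML, hMI, ?_⟩
  intro a
  have hcombo : ∀ i, combo (fun n => RA SS ξ M n) a i
      = ∑ n ∈ a.support, a n * RA SS ξ M n i := by
    intro i
    show (a.sum fun n c => c • RA SS ξ M n) i = _
    rw [Finsupp.sum, Finsupp.finset_sum_apply]
    exact Finset.sum_congr rfl (fun n _ => by rw [Finsupp.smul_apply, smul_eq_mul])
  by_cases ha : a = 0
  · subst ha
    have hc0 : combo (fun n => RA SS ξ M n) (0 : ℕ →₀ ℝ) = 0 := by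
      show ((0 : ℕ →₀ ℝ).sum fun n c => c • RA SS ξ M n) = 0
      exact Finsupp.sum_zero_index
    rw [hc0]
    have h1 : {c : ℝ | ∃ E ∈ SS.S ξ, c = ∑ i ∈ E, |(0 : ℕ →₀ ℝ) i|} = {0} := by
      ext c
      simp only [Set.mem_setOf_eq, Set.mem_singleton_iff]
      constructor
      · rintro ⟨E, hE, rfl⟩; simp
      · rintro rfl; exact ⟨∅, empty_mem_S SS hξ, by simp⟩
    have h2 : (Set.range fun n => |(0 : ℕ →₀ ℝ) n|) = {0} := by
      ext c
      simp [eq_comm]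
    rw [schreierNorm, h1, h2, csSup_singleton]
  · have hsuppne : a.support.Nonempty := Finsupp.support_nonempty_iff.2 ha
    obtain ⟨n₀, hn₀supp, hn₀max⟩ := a.support.exists_max_image (fun n => |a n|) hsuppne
    have hmax : ∀ n, |a n| ≤ |a n₀| := by
      intro n
      by_cases hn : n ∈ a.support
      · exact hn₀max n hn
      · rw [Finsupp.notMem_support_iff.1 hn, abs_zero]
        positivity
    have han₀ : a n₀ ≠ 0 := Finsupp.mem_support_iff.1 hn₀supp
    have hub : ∀ c ∈ {c : ℝ | ∃ E ∈ SS.S ξ,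
        c = ∑ i ∈ E, |combo (fun n => RA SS ξ M n) a i|}, c ≤ |a n₀| := by
      rintro c ⟨E, hE, rfl⟩
      have hstep : ∀ i ∈ E, |combo (fun n => RA SS ξ M n) a i|
          ≤ ∑ n ∈ a.support, |a n| * RA SS ξ M n i := by
        intro i _
        rw [hcombo i]
        refine le_trans (Finset.abs_sum_le_sum_abs _ _) ?_
        refine Finset.sum_le_sum (fun n _ => ?_)
        rw [abs_mul, abs_of_nonneg (P.nonneg M hMI hMpos n i)]
      calc ∑ i ∈ E, |combo (fun n => RA SS ξ M n) a i|
          ≤ ∑ i ∈ E, ∑ n ∈ a.support, |a n| * RA SS ξ M n i := Finset.sum_le_sum hstep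
        _ = ∑ n ∈ a.support, |a n| * ∑ i ∈ E, RA SS ξ M n i := by
            rw [Finset.sum_comm]
            exact Finset.sum_congr rfl (fun n _ => (Finset.mul_sum _ _ _).symm)
        _ ≤ ∑ n ∈ a.support, |a n₀| * ∑ i ∈ E, RA SS ξ M n i := by
            refine Finset.sum_le_sum (fun n _ => ?_)
            refine mul_le_mul_of_nonneg_right (hmax n) ?_
            exact Finset.sum_nonneg (fun i _ => P.nonneg M hMI hMpos n i)
        _ = |a n₀| * ∑ n ∈ a.support, ∑ i ∈ E, RA SS ξ M n i := (Finset.mul_sum _ _ _).symm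
        _ ≤ |a n₀| * 1 :=
            mul_le_mul_of_nonneg_left (P.est M hMI hSI E hE a.support) (abs_nonneg _)
        _ = |a n₀| := mul_one _
    have hmem : |a n₀| ∈ {c : ℝ | ∃ E ∈ SS.S ξ,
        c = ∑ i ∈ E, |combo (fun n => RA SS ξ M n) a i|} := by
      refine ⟨(RA SS ξ M n₀).support, P.memS M hMI hMpos n₀, ?_⟩
      have hterm : ∀ i ∈ (RA SS ξ M n₀).support,
          |combo (fun n => RA SS ξ M n) a i| = |a n₀| * RA SS ξ M n₀ i := by
        intro i hi
        rw [hcombo i]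
        rw [Finset.sum_eq_single n₀ (fun n _ hne => ?_) (fun hn₀ => absurd hn₀supp hn₀)]
        · rw [abs_mul, abs_of_nonneg (P.nonneg M hMI hMpos n₀ i)]
        · rw [P.apply_eq_zero_of_ne hMI hMpos (fun h => hne h.symm) hi, mul_zero]
      rw [Finset.sum_congr rfl hterm, ← Finset.mul_sum]
      have hmass : ∑ i ∈ (RA SS ξ M n₀).support, RA SS ξ M n₀ i = 1 := by
        have h1 := P.mass M hMI hMpos n₀
        rwa [mass_eq_sum_support] at h1
      rw [hmass, mul_one]
    have hLHS : schreierNorm SS ξ (combo (fun n => RA SS ξ M n) a) = |a n₀| := by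
      rw [schreierNorm]
      exact le_antisymm (csSup_le ⟨_, hmem⟩ hub) (le_csSup ⟨|a n₀|, hub⟩ hmem)
    have hRHS : sSup (Set.range fun n => |a n|) = |a n₀| :=
      le_antisymm (csSup_le (Set.range_nonempty _) (by rintro b ⟨n, rfl⟩; exact hmax n))
        (le_csSup ⟨|a n₀|, by rintro b ⟨n, rfl⟩; exact hmax n⟩ ⟨n₀, rfl⟩)
    rw [hLHS, hRHS]

end SchreierPaper
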